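/- arXiv:quant-ph/0109026 — 9 statements merged into one kernel-verified Lean document; each statement's English description precedes it below -/
import Mathlib

section
/- Let H be a complex inner product space and V a complex vector space. Let f be a map assigning to every pair (ψ,φ) of unit vectors of H an element f(ψ,φ) ∈ V, and suppose that for all unit vectors ψ, φ and all c₁, c₂ ∈ ℂ such that c₁ψ + c₂φ is again a unit vector, f(c₁ψ+c₂φ, c₁ψ+c₂φ) = |c₁|² f(ψ,ψ) + |c₂|² f(φ,φ) + conj(c₁)c₂ f(ψ,φ) + c₁ conj(c₂) f(φ,ψ). Then there exists a unique map B : H × H → V that is conjugate-linear in the first argument, linear in the second argument, and satisfies B(ψ,φ) = f(ψ,φ) for all unit vectors ψ, φ. -/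
open scoped ComplexConjugate

open Complex

/-!
Put `B x y := ‖x‖ ‖y‖ f (x / ‖x‖) (y / ‖y‖)`. Rescaling the interference condition (and, in the
degenerate case `c₁ ψ + c₂ φ = 0`, applying it to `ψ` as the midpoint of `ψ` and `u ψ` for a phase
`u`) shows that the diagonal of `B` expands as that of a sesquilinear form:
`B (x + c y) (x + c y) = B x x + |c|² B y y + c B x y + c̄ B y x`.
This identity alone forces sesquilinearity. Homogeneity comes from comparing the expansions of
`x + 1 • (c y)` and `x + c • y`, and of `x + i • (c y)` and `x + (i c) • y`. The parallelogram
law for the diagonal makes the symmetric part `B x y + B y x` additive by the Jordan–von Neumann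
argument, and substituting `i x` for `x` makes the antisymmetric part additive too. Uniqueness: a
map that is conjugate-homogeneous in the first and homogeneous in the second argument is
determined by its values on unit vectors.
-/

section Expansion

variable {H V : Type*} [AddCommGroup H] [Module ℂ H] [AddCommGroup V] [Module ℂ V]

def ExpandsSesquilinearly (B : H → H → V) : Prop :=
  ∀ (x y : H) (c : ℂ),
    B (x + c • y) (x + c • y) = B x x + (conj c * c) • B y y + c • B x y + conj c • B y x

namespace ExpandsSesquilinearly

variable {B : H → H → V}

theorem apply_zero_zero (hB : ExpandsSesquilinearly B) : B 0 0 = 0 := by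
  have h := hB 0 0 1
  simp only [smul_zero, add_zero, map_one, mul_one, one_smul] at h
  linear_combination (norm := module) (-3⁻¹ : ℂ) • h

theorem apply_zero_right (hB : ExpandsSesquilinearly B) (x : H) : B x 0 = 0 := by
  have h₁ := hB x 0 1
  have h₂ := hB x 0 I
  simp only [smul_zero, add_zero, map_one, one_smul, conj_I, hB.apply_zero_zero] at h₁ h₂
  refine (smul_right_inj I_ne_zero).1 ?_
  linear_combination (norm := module) (-2⁻¹ * I : ℂ) • h₁ - (2⁻¹ : ℂ) • h₂

theorem apply_zero_left (hB : ExpandsSesquilinearly B) (x : H) : B 0 x = 0 := by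
  have h₁ := hB x 0 1
  have h₂ := hB x 0 I
  simp only [smul_zero, add_zero, map_one, one_smul, conj_I, hB.apply_zero_zero] at h₁ h₂
  refine (smul_right_inj I_ne_zero).1 ?_
  linear_combination (norm := module) (-2⁻¹ * I : ℂ) • h₁ + (2⁻¹ : ℂ) • h₂

theorem apply_smul_smul (hB : ExpandsSesquilinearly B) (c : ℂ) (x : H) :
    B (c • x) (c • x) = (conj c * c) • B x x := by
  simpa [hB.apply_zero_zero, hB.apply_zero_left, hB.apply_zero_right] using hB 0 x c

theorem add_swap_eq_sub (hB : ExpandsSesquilinearly B) (x y : H) :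
    B x y + B y x = B (x + y) (x + y) - B x x - B y y := by
  have h := hB x y 1
  simp only [one_smul, map_one, mul_one] at h
  rw [h]
  abel

theorem parallelogram (hB : ExpandsSesquilinearly B) (x y : H) :
    B (x + y) (x + y) + B (x - y) (x - y) = (2 : ℂ) • B x x + (2 : ℂ) • B y y := by
  have h₁ := hB x y 1
  have h₂ := hB x y (-1)
  simp only [one_smul, neg_smul, map_one, map_neg, mul_one, neg_mul_neg, ← sub_eq_add_neg] at h₁ h₂
  linear_combination (norm := module) h₁ + h₂

theorem add_swap_add_left (hB : ExpandsSesquilinearly B) (a b y : H) :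
    B (a + b) y + B y (a + b) = (B a y + B y a) + (B b y + B y b) := by
  have jvn : ∀ u v : H, (B (u + v) y + B y (u + v)) + (B (u - v) y + B y (u - v))
      = (2 : ℂ) • (B u y + B y u) := by
    intro u v
    simp only [hB.add_swap_eq_sub]
    have p₁ := hB.parallelogram (u + y) v
    have p₂ := hB.parallelogram u v
    rw [show u + v + y = u + y + v by abel, show u - v + y = u + y - v by abel]
    linear_combination (norm := module) p₁ - p₂
  have h₁ := jvn ((2⁻¹ : ℂ) • (a + b)) ((2⁻¹ : ℂ) • (a - b))
  have h₂ := jvn ((2⁻¹ : ℂ) • (a + b)) ((2⁻¹ : ℂ) • (a + b))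
  rw [show (2⁻¹ : ℂ) • (a + b) + (2⁻¹ : ℂ) • (a - b) = a by module,
    show (2⁻¹ : ℂ) • (a + b) - (2⁻¹ : ℂ) • (a - b) = b by module] at h₁
  rw [show (2⁻¹ : ℂ) • (a + b) + (2⁻¹ : ℂ) • (a + b) = a + b by module, sub_self,
    hB.apply_zero_left, hB.apply_zero_right] at h₂
  linear_combination (norm := module) h₂ - h₁

theorem add_swap_smul (hB : ExpandsSesquilinearly B) (c : ℂ) (x y : H) :
    B x (c • y) + B (c • y) x = c • B x y + conj c • B y x := by
  have h₁ := hB x (c • y) 1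
  have h₂ := hB x y c
  simp only [one_smul, map_one, mul_one, hB.apply_smul_smul] at h₁
  linear_combination (norm := module) h₂ - h₁

theorem sub_swap_smul (hB : ExpandsSesquilinearly B) (c : ℂ) (x y : H) :
    B x (c • y) - B (c • y) x = c • B x y - conj c • B y x := by
  have h₁ := hB.add_swap_smul I x (c • y)
  have h₂ := hB.add_swap_smul (I * c) x y
  rw [smul_smul, h₂, conj_I, map_mul, conj_I] at h₁
  refine (smul_right_inj I_ne_zero).1 ?_
  linear_combination (norm := module) -h₁

theorem smul_right (hB : ExpandsSesquilinearly B) (c : ℂ) (x y : H) :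
    B x (c • y) = c • B x y := by
  linear_combination (norm := module)
    (2⁻¹ : ℂ) • (hB.add_swap_smul c x y + hB.sub_swap_smul c x y)

theorem smul_left (hB : ExpandsSesquilinearly B) (c : ℂ) (x y : H) :
    B (c • x) y = conj c • B x y := by
  linear_combination (norm := module)
    (2⁻¹ : ℂ) • (hB.add_swap_smul c y x - hB.sub_swap_smul c y x)

theorem sub_swap_add_left (hB : ExpandsSesquilinearly B) (a b y : H) :
    B (a + b) y - B y (a + b) = (B a y - B y a) + (B b y - B y b) := by
  have h := hB.add_swap_add_left (I • a) (I • b) y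
  simp only [← smul_add, hB.smul_left, hB.smul_right, conj_I] at h
  refine (smul_right_inj I_ne_zero).1 ?_
  linear_combination (norm := module) -h

theorem add_left (hB : ExpandsSesquilinearly B) (a b y : H) :
    B (a + b) y = B a y + B b y := by
  linear_combination (norm := module)
    (2⁻¹ : ℂ) • (hB.add_swap_add_left a b y + hB.sub_swap_add_left a b y)

theorem add_right (hB : ExpandsSesquilinearly B) (y a b : H) :
    B y (a + b) = B y a + B y b := by
  linear_combination (norm := module)
    (2⁻¹ : ℂ) • (hB.add_swap_add_left a b y - hB.sub_swap_add_left a b y)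

end ExpandsSesquilinearly

end Expansion

section PhaseObservable

variable {H V : Type*} [NormedAddCommGroup H] [InnerProductSpace ℂ H] [AddCommGroup V] [Module ℂ V]

noncomputable def unitVec (x : H) : H := (‖x‖ : ℂ)⁻¹ • x

theorem norm_unitVec {x : H} (hx : x ≠ 0) : ‖unitVec x‖ = 1 := by
  simp [unitVec, norm_smul, hx]

theorem unitVec_of_norm_eq_one {x : H} (hx : ‖x‖ = 1) : unitVec x = x := by
  simp [unitVec, hx]

theorem norm_smul_unitVec (x : H) : (‖x‖ : ℂ) • unitVec x = x := by
  rcases eq_or_ne x 0 with rfl | hx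
  · simp
  · rw [unitVec, smul_inv_smul₀ (by simpa using hx)]

def InterferenceCondition (f : H → H → V) : Prop :=
  ∀ ψ φ : H, ‖ψ‖ = 1 → ‖φ‖ = 1 → ∀ c₁ c₂ : ℂ, ‖c₁ • ψ + c₂ • φ‖ = 1 →
    f (c₁ • ψ + c₂ • φ) (c₁ • ψ + c₂ • φ)
      = ((‖c₁‖ ^ 2 : ℝ) : ℂ) • f ψ ψ + ((‖c₂‖ ^ 2 : ℝ) : ℂ) • f φ φ
        + (conj c₁ * c₂) • f ψ φ + (c₁ * conj c₂) • f φ ψ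

noncomputable def sesqExtension (f : H → H → V) (x y : H) : V :=
  ((‖x‖ : ℂ) * ‖y‖) • f (unitVec x) (unitVec y)

theorem sesqExtension_of_norm_eq_one (f : H → H → V) {x y : H} (hx : ‖x‖ = 1) (hy : ‖y‖ = 1) :
    sesqExtension f x y = f x y := by
  simp [sesqExtension, hx, hy, unitVec_of_norm_eq_one]

theorem eq_sesqExtension {f : H → H → V} {B : H → H → V}
    (smul_left : ∀ (c : ℂ) (x y : H), B (c • x) y = conj c • B x y)
    (smul_right : ∀ (c : ℂ) (x y : H), B x (c • y) = c • B x y)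
    (hBf : ∀ x y : H, ‖x‖ = 1 → ‖y‖ = 1 → B x y = f x y) :
    B = sesqExtension f := by
  funext x y
  have hB : B x y = ((‖x‖ : ℂ) * ‖y‖) • B (unitVec x) (unitVec y) := by
    conv_lhs => rw [← norm_smul_unitVec x, ← norm_smul_unitVec y]
    rw [smul_left, smul_right, conj_ofReal, smul_smul]
  rcases eq_or_ne x 0 with rfl | hx
  · simp [hB, sesqExtension]
  rcases eq_or_ne y 0 with rfl | hy
  · simp [hB, sesqExtension]
  rw [hB, hBf _ _ (norm_unitVec hx) (norm_unitVec hy), sesqExtension]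

namespace InterferenceCondition

variable {f : H → H → V}

theorem apply_smul_self (hf : InterferenceCondition f) {ψ : H} (hψ : ‖ψ‖ = 1) {u : ℂ}
    (hu : ‖u‖ = 1) : f (u • ψ) (u • ψ) = f ψ ψ := by
  simpa [hu] using hf ψ ψ hψ hψ u 0 (by simp [norm_smul, hu, hψ])

theorem cross_phase (hf : InterferenceCondition f) {ψ : H} (hψ : ‖ψ‖ = 1) {u : ℂ}
    (hu : ‖u‖ = 1) : conj u • f ψ (u • ψ) + u • f (u • ψ) ψ = (2 : ℂ) • f ψ ψ := by
  have huu : conj u * u = 1 := by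
    rw [conj_mul', hu]
    norm_num
  have hmid : (2⁻¹ : ℂ) • ψ + (2⁻¹ * conj u) • (u • ψ) = ψ := by
    rw [smul_smul, ← add_smul, mul_assoc, huu]
    norm_num
  have h := hf ψ (u • ψ) hψ (by simp [norm_smul, hu, hψ]) 2⁻¹ (2⁻¹ * conj u) (by rw [hmid, hψ])
  rw [hmid, hf.apply_smul_self hψ hu] at h
  simp only [norm_mul, RCLike.norm_conj, hu, map_mul, conj_conj, map_inv₀, map_ofNat] at h
  norm_num at h
  linear_combination (norm := module) (-4 : ℂ) • h

theorem expansion_eq_zero_of_combination_eq_zero (hf : InterferenceCondition f) {ψ φ : H}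
    (hψ : ‖ψ‖ = 1) (hφ : ‖φ‖ = 1) {c₁ c₂ : ℂ} (h : c₁ • ψ + c₂ • φ = 0) :
    ((‖c₁‖ ^ 2 : ℝ) : ℂ) • f ψ ψ + ((‖c₂‖ ^ 2 : ℝ) : ℂ) • f φ φ
      + (conj c₁ * c₂) • f ψ φ + (c₁ * conj c₂) • f φ ψ = 0 := by
  have hψ0 : ψ ≠ 0 := by rintro rfl; simp at hψ
  rcases eq_or_ne c₂ 0 with rfl | hc₂
  · obtain rfl : c₁ = 0 := by simpa [hψ0] using h
    simp
  obtain ⟨u, hu, rfl, rfl⟩ : ∃ u : ℂ, ‖u‖ = 1 ∧ φ = u • ψ ∧ c₁ = -u * c₂ := by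
    have hφψ : φ = (-(c₁ / c₂)) • ψ := by
      refine (smul_right_inj hc₂).1 ?_
      rw [smul_smul, mul_neg, mul_div_cancel₀ _ hc₂]
      linear_combination (norm := module) h
    refine ⟨-(c₁ / c₂), ?_, hφψ, by field_simp⟩
    simpa [hφψ, norm_smul, hψ] using hφ
  have hcross := hf.cross_phase hψ hu
  rw [hf.apply_smul_self hψ hu]
  simp only [norm_mul, norm_neg, hu, one_mul, map_mul, map_neg, mul_assoc, conj_mul', mul_conj']
  push_cast
  linear_combination (norm := module) (-(‖c₂‖ : ℂ) ^ 2) • hcross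

theorem sesqExtension_combination (hf : InterferenceCondition f) {ψ φ : H} (hψ : ‖ψ‖ = 1)
    (hφ : ‖φ‖ = 1) (c₁ c₂ : ℂ) :
    sesqExtension f (c₁ • ψ + c₂ • φ) (c₁ • ψ + c₂ • φ)
      = ((‖c₁‖ ^ 2 : ℝ) : ℂ) • f ψ ψ + ((‖c₂‖ ^ 2 : ℝ) : ℂ) • f φ φ
        + (conj c₁ * c₂) • f ψ φ + (c₁ * conj c₂) • f φ ψ := by
  rcases eq_or_ne (c₁ • ψ + c₂ • φ) 0 with hv0 | hv0
  · rw [hf.expansion_eq_zero_of_combination_eq_zero hψ hφ hv0, hv0]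
    simp [sesqExtension]
  set v := c₁ • ψ + c₂ • φ
  have ht : ((‖v‖ : ℝ) : ℂ) ≠ 0 := by simpa using hv0
  have hunit : unitVec v = ((‖v‖ : ℂ)⁻¹ * c₁) • ψ + ((‖v‖ : ℂ)⁻¹ * c₂) • φ := by
    rw [unitVec, smul_add, smul_smul, smul_smul]
  have h := hf ψ φ hψ hφ _ _ (hunit ▸ norm_unitVec hv0)
  rw [← hunit] at h
  rw [sesqExtension, h]
  simp only [norm_mul, norm_inv, norm_real, norm_norm, map_mul, map_inv₀, conj_ofReal]
  match_scalars <;> field_simp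

theorem expandsSesquilinearly (hf : InterferenceCondition f) :
    ExpandsSesquilinearly (sesqExtension f) := by
  intro x y c
  rcases eq_or_ne y 0 with rfl | hy
  · simp [sesqExtension]
  rcases eq_or_ne x 0 with rfl | hx
  · have h := hf.sesqExtension_combination (norm_unitVec hy) (norm_unitVec hy) 0 (c * ‖y‖)
    rw [zero_smul, zero_add, ← smul_smul, norm_smul_unitVec] at h
    rw [zero_add, h]
    simp only [sesqExtension, smul_smul, conj_mul', norm_zero, norm_mul, norm_real, norm_norm,
      map_mul, map_zero, conj_ofReal]
    push_cast
    match_scalars <;> ring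
  have h := hf.sesqExtension_combination (norm_unitVec hx) (norm_unitVec hy) ‖x‖ (c * ‖y‖)
  rw [← smul_smul, norm_smul_unitVec, norm_smul_unitVec] at h
  rw [h]
  simp only [sesqExtension, smul_smul, conj_mul', norm_mul, norm_real, norm_norm, map_mul,
    conj_ofReal]
  push_cast
  match_scalars <;> ring

end InterferenceCondition

end PhaseObservable

/-- **Existence and uniqueness of the sesquilinear extension of a phase observable.**
Let `H` be a complex inner product space and `V` a complex vector space.  If a map
`f` assigning to each pair of unit vectors of `H` an element of `V` satisfies the
interference condition
`f(c₁ψ+c₂φ, c₁ψ+c₂φ) = |c₁|² f(ψ,ψ) + |c₂|² f(φ,φ) + conj(c₁)c₂ f(ψ,φ) + c₁ conj(c₂) f(φ,ψ)`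
whenever `ψ`, `φ` and `c₁ψ+c₂φ` are unit vectors, then there is a unique map
`B : H × H → V`, conjugate-linear in the first argument and linear in the second,
agreeing with `f` on pairs of unit vectors. -/
theorem phase_observable_sesquilinear_extension
    {H V : Type*} [NormedAddCommGroup H] [InnerProductSpace ℂ H]
    [AddCommGroup V] [Module ℂ V]
    (f : H → H → V)
    (hf : ∀ ψ φ : H, ‖ψ‖ = 1 → ‖φ‖ = 1 → ∀ c₁ c₂ : ℂ, ‖c₁ • ψ + c₂ • φ‖ = 1 →
      f (c₁ • ψ + c₂ • φ) (c₁ • ψ + c₂ • φ)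
        = ((‖c₁‖ ^ 2 : ℝ) : ℂ) • f ψ ψ + ((‖c₂‖ ^ 2 : ℝ) : ℂ) • f φ φ
          + (conj c₁ * c₂) • f ψ φ + (c₁ * conj c₂) • f φ ψ) :
    ∃! B : H → H → V,
      (∀ ψ ψ' φ : H, B (ψ + ψ') φ = B ψ φ + B ψ' φ) ∧
      (∀ (c : ℂ) (ψ φ : H), B (c • ψ) φ = (conj c) • B ψ φ) ∧
      (∀ ψ φ φ' : H, B ψ (φ + φ') = B ψ φ + B ψ φ') ∧
      (∀ (c : ℂ) (ψ φ : H), B ψ (c • φ) = c • B ψ φ) ∧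
      (∀ ψ φ : H, ‖ψ‖ = 1 → ‖φ‖ = 1 → B ψ φ = f ψ φ) := by
  have hB : ExpandsSesquilinearly (sesqExtension f) :=
    InterferenceCondition.expandsSesquilinearly hf
  refine ⟨sesqExtension f, ⟨hB.add_left, hB.smul_left, hB.add_right, hB.smul_right,
    fun _ _ => sesqExtension_of_norm_eq_one f⟩, ?_⟩
  rintro B ⟨-, smul_left, -, smul_right, hBf⟩
  exact eq_sesqExtension smul_left smul_right hBf
end

section
/- Let (Ω,μ) be a measure space, H a complex inner product space, and B : H × H → L¹(Ω,μ) a map that is conjugate-linear in the first argument and linear in the second argument, such that for every ψ ∈ H the function B(ψ,ψ) is nonnegative μ-almost everywhere. Then for all ψ, φ ∈ H one has |B(ψ,φ)(ω)| ≤ √(B(ψ,ψ)(ω) · B(φ,φ)(ω)) for μ-almost every ω, and consequently ‖B(ψ,φ)‖_{L¹} ≤ √(‖B(ψ,ψ)‖_{L¹} · ‖B(φ,φ)‖_{L¹}). -/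
/-!
For fixed `ψ, φ` and each `c : ℂ`, positivity of `B (ψ + c • φ) (ψ + c • φ)` says that
`A + c x + c̄ y + |c|² D ≥ 0` a.e., where `A, x, y, D` are the values of `B ψ ψ`, `B ψ φ`,
`B φ ψ`, `B φ φ`. The condition is closed in `c` and `ℂ` is separable, so a single null set
serves all `c`. Off that set the imaginary parts force `y = x̄`, and along `c = t u` with
`u x = ‖x‖`, `t : ℝ`, we get the real quadratic `D t² + 2‖x‖ t + A ≥ 0`, whose discriminant
gives `‖x‖² ≤ A D`. Integrating `‖x‖ ≤ √A √D` and applying Hölder's inequality to `√A, √D ∈ L²`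
gives the `L¹` bound.
-/

open MeasureTheory
open scoped ComplexConjugate ComplexOrder ENNReal

namespace Complex

theorem eq_conj_of_forall_nonneg {A x y D : ℂ}
    (h : ∀ c : ℂ, 0 ≤ A + c * x + conj c * y + conj c * c * D) : y = conj x := by
  have him : ∀ c : ℂ, (A + c * x + conj c * y + conj c * c * D).im = 0 := fun c => (h c).2.symm
  have h₀ := him 0
  have h₁ := him 1
  have hneg := him (-1)
  have hI := him I
  simp [mul_im] at h₀ h₁ hneg hI
  apply Complex.ext <;> simp only [conj_re, conj_im] <;> linarith

theorem norm_le_sqrt_re_mul_re_of_forall_nonneg {A x y D : ℂ}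
    (h : ∀ c : ℂ, 0 ≤ A + c * x + conj c * y + conj c * c * D) :
    ‖x‖ ≤ √(A.re * D.re) := by
  obtain rfl := eq_conj_of_forall_nonneg h
  obtain ⟨u, hu, hux⟩ := exists_norm_eq_mul_self x
  have hquad : ∀ t : ℝ, 0 ≤ D.re * (t * t) + 2 * ‖x‖ * t + A.re := by
    intro t
    have hcx : (t * u) * x = (t * ‖x‖ : ℝ) := by rw [mul_assoc, ← hux]; push_cast; rfl
    have hcx' : conj (t * u) * conj x = (t * ‖x‖ : ℝ) := by rw [← map_mul, hcx, conj_ofReal]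
    have hcc : conj (t * u) * (t * u) = (t ^ 2 : ℝ) := by
      rw [conj_mul', norm_mul, hu, mul_one, norm_real, Real.norm_eq_abs, ← ofReal_pow, sq_abs]
    have := (h (t * u)).1
    rw [hcx, hcx', hcc] at this
    simp only [zero_re, add_re, ofReal_re, re_ofReal_mul] at this
    linarith
  have hdiscr := discrim_le_zero hquad
  rw [discrim] at hdiscr
  exact Real.le_sqrt_of_sq_le (by nlinarith)

end Complex

theorem MeasureTheory.ae_forall_of_isClosed {α Ω : Type*} [TopologicalSpace α]
    [TopologicalSpace.SeparableSpace α] [MeasurableSpace Ω] {μ : Measure Ω} {p : Ω → α → Prop}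
    (hp : ∀ ω, IsClosed {c | p ω c}) (h : ∀ c, ∀ᵐ ω ∂μ, p ω c) : ∀ᵐ ω ∂μ, ∀ c, p ω c := by
  obtain ⟨S, hSc, hSd⟩ := TopologicalSpace.exists_countable_dense α
  filter_upwards [(ae_ball_iff hSc).2 fun c _ => h c] with ω hω
  exact hSd.induction hω (hp ω)

section Integral

variable {α : Type*} [MeasurableSpace α] {μ : Measure α} {f g : α → ℝ}

theorem MeasureTheory.Integrable.memLp_two_sqrt (hf : Integrable f μ) (hf₀ : 0 ≤ᵐ[μ] f) :
    MemLp (fun a => √(f a)) 2 μ := by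
  refine (memLp_two_iff_integrable_sq
    (Real.continuous_sqrt.comp_aestronglyMeasurable hf.aestronglyMeasurable)).2 ?_
  exact hf.congr (hf₀.mono fun a h => (Real.sq_sqrt h).symm)

theorem MeasureTheory.Integrable.sqrt_mul (hf : Integrable f μ) (hg : Integrable g μ)
    (hf₀ : 0 ≤ᵐ[μ] f) (hg₀ : 0 ≤ᵐ[μ] g) : Integrable (fun a => √(f a * g a)) μ := by
  refine ((hf.memLp_two_sqrt hf₀).integrable_mul (hg.memLp_two_sqrt hg₀)).congr ?_
  filter_upwards [hf₀] with a ha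
  exact (Real.sqrt_mul ha _).symm

theorem integral_sqrt_mul_le_sqrt_mul_integral (hf : Integrable f μ) (hg : Integrable g μ)
    (hf₀ : 0 ≤ᵐ[μ] f) (hg₀ : 0 ≤ᵐ[μ] g) :
    ∫ a, √(f a * g a) ∂μ ≤ √((∫ a, f a ∂μ) * ∫ a, g a ∂μ) := by
  have hsq : ∀ {h : α → ℝ}, 0 ≤ᵐ[μ] h → ∫ a, √(h a) ^ (2 : ℝ) ∂μ = ∫ a, h a ∂μ := fun h₀ =>
    integral_congr_ae (h₀.mono fun a ha => by simp [Real.sq_sqrt ha])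
  calc ∫ a, √(f a * g a) ∂μ = ∫ a, √(f a) * √(g a) ∂μ :=
        integral_congr_ae (hf₀.mono fun a ha => Real.sqrt_mul ha _)
    _ ≤ (∫ a, √(f a) ^ (2 : ℝ) ∂μ) ^ (1 / 2 : ℝ) * (∫ a, √(g a) ^ (2 : ℝ) ∂μ) ^ (1 / 2 : ℝ) :=
        integral_mul_le_Lp_mul_Lq_of_nonneg Real.HolderConjugate.two_two
          (.of_forall fun _ => Real.sqrt_nonneg _) (.of_forall fun _ => Real.sqrt_nonneg _)
          (by simpa using hf.memLp_two_sqrt hf₀) (by simpa using hg.memLp_two_sqrt hg₀)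
    _ = √((∫ a, f a ∂μ) * ∫ a, g a ∂μ) := by
        rw [hsq hf₀, hsq hg₀, ← Real.sqrt_eq_rpow, ← Real.sqrt_eq_rpow,
          Real.sqrt_mul (integral_nonneg_of_ae hf₀)]

theorem MeasureTheory.L1.norm_eq_integral_re_of_nonneg {f : Lp ℂ 1 μ}
    (hf : ∀ᵐ a ∂μ, 0 ≤ (f : α → ℂ) a) : ‖f‖ = ∫ a, ((f : α → ℂ) a).re ∂μ := by
  rw [L1.norm_eq_integral_norm]
  exact integral_congr_ae (hf.mono fun a ha => by
    simpa using congrArg Complex.re (Complex.norm_of_nonneg' ha))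

end Integral

section Sesquilinear

variable {H : Type*} [AddCommMonoid H] [Module ℂ H]

theorem apply_add_smul_add_smul {E : Type*} [AddCommMonoid E] [Module ℂ E] {B : H → H → E}
    (hadd₁ : ∀ ψ ψ' φ : H, B (ψ + ψ') φ = B ψ φ + B ψ' φ)
    (hsmul₁ : ∀ (c : ℂ) (ψ φ : H), B (c • ψ) φ = conj c • B ψ φ)
    (hadd₂ : ∀ ψ φ φ' : H, B ψ (φ + φ') = B ψ φ + B ψ φ')
    (hsmul₂ : ∀ (c : ℂ) (ψ φ : H), B ψ (c • φ) = c • B ψ φ) (ψ φ : H) (c : ℂ) :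
    B (ψ + c • φ) (ψ + c • φ) = B ψ ψ + c • B ψ φ + conj c • B φ ψ + (conj c * c) • B φ φ := by
  rw [hadd₁, hadd₂, hadd₂, hsmul₂, hsmul₁, hsmul₁, hsmul₂, smul_smul]
  abel

theorem ae_forall_nonneg_sesq_add_smul {Ω : Type*} [MeasurableSpace Ω] {μ : Measure Ω}
    {p : ℝ≥0∞} {B : H → H → Lp ℂ p μ}
    (hadd₁ : ∀ ψ ψ' φ : H, B (ψ + ψ') φ = B ψ φ + B ψ' φ)
    (hsmul₁ : ∀ (c : ℂ) (ψ φ : H), B (c • ψ) φ = conj c • B ψ φ)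
    (hadd₂ : ∀ ψ φ φ' : H, B ψ (φ + φ') = B ψ φ + B ψ φ')
    (hsmul₂ : ∀ (c : ℂ) (ψ φ : H), B ψ (c • φ) = c • B ψ φ)
    (hpos : ∀ ψ : H, ∀ᵐ ω ∂μ, 0 ≤ (B ψ ψ : Ω → ℂ) ω) (ψ φ : H) :
    ∀ᵐ ω ∂μ, ∀ c : ℂ, 0 ≤ (B ψ ψ : Ω → ℂ) ω + c * (B ψ φ : Ω → ℂ) ω
      + conj c * (B φ ψ : Ω → ℂ) ω + conj c * c * (B φ φ : Ω → ℂ) ω := by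
  refine ae_forall_of_isClosed (fun ω => isClosed_le continuous_const (by fun_prop)) fun c => ?_
  have h := hpos (ψ + c • φ)
  rw [apply_add_smul_add_smul hadd₁ hsmul₁ hadd₂ hsmul₂] at h
  filter_upwards [h, Lp.coeFn_add (B ψ ψ + c • B ψ φ + conj c • B φ ψ) ((conj c * c) • B φ φ),
    Lp.coeFn_add (B ψ ψ + c • B ψ φ) (conj c • B φ ψ), Lp.coeFn_add (B ψ ψ) (c • B ψ φ),
    Lp.coeFn_smul c (B ψ φ), Lp.coeFn_smul (conj c) (B φ ψ),
    Lp.coeFn_smul (conj c * c) (B φ φ)] with ω hω e₁ e₂ e₃ e₄ e₅ e₆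
  simpa only [e₁, e₂, e₃, e₄, e₅, e₆, Pi.add_apply, Pi.smul_apply, smul_eq_mul] using hω

end Sesquilinear

/-- **Pointwise Cauchy–Schwarz inequality for positive sesquilinear maps with values
in `L¹`.**  Let `(Ω,μ)` be a measure space, `H` a complex inner product space, and
`B : H × H → L¹(Ω,μ)` conjugate-linear in the first argument and linear in the
second, with `B(ψ,ψ) ≥ 0` `μ`-a.e. for every `ψ`.  Then for all `ψ, φ`,
`|B(ψ,φ)(ω)| ≤ √(B(ψ,ψ)(ω)·B(φ,φ)(ω))` for `μ`-a.e. `ω`, and consequently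
`‖B(ψ,φ)‖₁ ≤ √(‖B(ψ,ψ)‖₁·‖B(φ,φ)‖₁)`. -/
theorem pointwise_cauchy_schwarz_L1
    {H Ω : Type*} [NormedAddCommGroup H] [InnerProductSpace ℂ H]
    [MeasurableSpace Ω] (μ : Measure Ω)
    (B : H → H → Lp ℂ 1 μ)
    (hadd₁ : ∀ ψ ψ' φ : H, B (ψ + ψ') φ = B ψ φ + B ψ' φ)
    (hsmul₁ : ∀ (c : ℂ) (ψ φ : H), B (c • ψ) φ = (conj c) • B ψ φ)
    (hadd₂ : ∀ ψ φ φ' : H, B ψ (φ + φ') = B ψ φ + B ψ φ')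
    (hsmul₂ : ∀ (c : ℂ) (ψ φ : H), B ψ (c • φ) = c • B ψ φ)
    (hpos : ∀ ψ : H, ∀ᵐ ω ∂μ, 0 ≤ (B ψ ψ : Ω → ℂ) ω) :
    ∀ ψ φ : H,
      (∀ᵐ ω ∂μ, ‖(B ψ φ : Ω → ℂ) ω‖ ≤
        Real.sqrt (((B ψ ψ : Ω → ℂ) ω).re * ((B φ φ : Ω → ℂ) ω).re)) ∧
      ‖B ψ φ‖ ≤ Real.sqrt (‖B ψ ψ‖ * ‖B φ φ‖) := by
  intro ψ φ
  have hpointwise : ∀ᵐ ω ∂μ, ‖(B ψ φ : Ω → ℂ) ω‖ ≤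
      √(((B ψ ψ : Ω → ℂ) ω).re * ((B φ φ : Ω → ℂ) ω).re) := by
    filter_upwards [ae_forall_nonneg_sesq_add_smul hadd₁ hsmul₁ hadd₂ hsmul₂ hpos ψ φ] with ω hω
    exact Complex.norm_le_sqrt_re_mul_re_of_forall_nonneg hω
  refine ⟨hpointwise, ?_⟩
  have hre_nonneg (χ : H) : 0 ≤ᵐ[μ] fun ω => ((B χ χ : Ω → ℂ) ω).re :=
    (hpos χ).mono fun _ h => h.1
  have hre_int (χ : H) : Integrable (fun ω => ((B χ χ : Ω → ℂ) ω).re) μ :=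
    (L1.integrable_coeFn (B χ χ)).re
  rw [L1.norm_eq_integral_re_of_nonneg (hpos ψ), L1.norm_eq_integral_re_of_nonneg (hpos φ),
    L1.norm_eq_integral_norm]
  calc ∫ ω, ‖(B ψ φ : Ω → ℂ) ω‖ ∂μ
      ≤ ∫ ω, √(((B ψ ψ : Ω → ℂ) ω).re * ((B φ φ : Ω → ℂ) ω).re) ∂μ :=
        integral_mono_of_nonneg (.of_forall fun _ => norm_nonneg _)
          ((hre_int ψ).sqrt_mul (hre_int φ) (hre_nonneg ψ) (hre_nonneg φ)) hpointwise
    _ ≤ _ := integral_sqrt_mul_le_sqrt_mul_integral (hre_int ψ) (hre_int φ) (hre_nonneg ψ)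
        (hre_nonneg φ)
end

section
/- Let c : ℕ × ℕ → ℂ. Suppose that for every finitely supported sequence a : ℕ → ℂ with ∑_n |a_n|² = 1, the function θ ↦ ∑_{n,m} c_{n,m} e^{i(n-m)θ} conj(a_n) a_m takes nonnegative real values for almost every θ ∈ [0,2π) and satisfies (2π)^{-1} ∫_0^{2π} ∑_{n,m} c_{n,m} e^{i(n-m)θ} conj(a_n) a_m dθ = 1. Then c is a phase matrix: for every finitely supported a : ℕ → ℂ the number ∑_{n,m} conj(a_n) c_{n,m} a_m is a nonnegative real, c_{m,n} = conj(c_{n,m}) for all n, m, and c_{n,n} = 1 for all n. -/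
/-!
At `θ = 0` the density is the quadratic form `∑ conj(a_n) c_{n,m} a_m`, and the density is
continuous, so its a.e. nonnegativity on `[0, 2π)` forces the form to be nonnegative on unit
vectors, hence on all vectors by homogeneity. A complex quadratic form with real values comes
from a hermitian matrix (polarize with `e_n + e_m` and `e_n + i e_m`). For `a = e_n` the density
is the constant `c_{n,n}`, so normalization gives `c_{n,n} = 1`.
-/

open MeasureTheory Real Set
open scoped ComplexConjugate ComplexOrder

/-- The phase probability density `θ ↦ ∑_{n,m} c_{n,m} e^{i(n-m)θ} conj(a_n) a_m`
associated with a matrix `c : ℕ × ℕ → ℂ` and a finitely supported sequence `a`. -/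
noncomputable def phaseDensity (c : ℕ → ℕ → ℂ) (a : ℕ →₀ ℂ) (θ : ℝ) : ℂ :=
  a.sum fun n an => a.sum fun m am =>
    c n m * Complex.exp (Complex.I * ((n : ℂ) - (m : ℂ)) * (θ : ℂ)) * conj an * am

noncomputable def matrixQuadForm {α : Type*} (c : α → α → ℂ) (a : α →₀ ℂ) : ℂ :=
  a.sum fun n an => a.sum fun m am => conj an * c n m * am

lemma Finsupp.sum_norm_sq_smul {α 𝕜 : Type*} [NormedDivisionRing 𝕜] (s : 𝕜) (a : α →₀ 𝕜) :
    ((s • a).sum fun _ x => ‖x‖ ^ 2) = ‖s‖ ^ 2 * a.sum fun _ x => ‖x‖ ^ 2 := by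
  rw [Finsupp.sum_of_support_subset _ Finsupp.support_smul _ (by simp), Finsupp.sum,
    Finset.mul_sum]
  simp only [Finsupp.smul_apply, smul_eq_mul, norm_mul, mul_pow]

section QuadForm

variable {α : Type*} (c : α → α → ℂ)

lemma matrixQuadForm_eq_sum {a : α →₀ ℂ} {s : Finset α} (hs : a.support ⊆ s) :
    matrixQuadForm c a = ∑ n ∈ s, ∑ m ∈ s, conj (a n) * c n m * a m := by
  rw [matrixQuadForm, Finsupp.sum_of_support_subset a hs _ (by simp)]
  exact Finset.sum_congr rfl fun n _ => Finsupp.sum_of_support_subset a hs _ (by simp)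

lemma matrixQuadForm_single_add_single {n m : α} (hnm : n ≠ m) (x y : ℂ) :
    matrixQuadForm c (Finsupp.single n x + Finsupp.single m y) =
      conj x * c n n * x + conj x * c n m * y + conj y * c m n * x + conj y * c m m * y := by
  classical
  have hsupp : (Finsupp.single n x + Finsupp.single m y).support ⊆ {n, m} :=
    Finsupp.support_add.trans <| Finset.union_subset
      (Finsupp.support_single_subset.trans (by simp))
      (Finsupp.support_single_subset.trans (by simp))
  rw [matrixQuadForm_eq_sum c hsupp, Finset.sum_pair hnm, Finset.sum_pair hnm,
    Finset.sum_pair hnm]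
  simp only [Finsupp.add_apply, Finsupp.single_eq_same, Finsupp.single_eq_of_ne hnm,
    Finsupp.single_eq_of_ne hnm.symm, add_zero, zero_add]
  ring

lemma im_eq_zero_of_forall_im_matrixQuadForm_eq_zero
    (h : ∀ a, (matrixQuadForm c a).im = 0) (n : α) : (c n n).im = 0 := by
  simpa [matrixQuadForm, Finsupp.sum_single_index] using h (Finsupp.single n 1)

lemma conj_eq_of_forall_im_matrixQuadForm_eq_zero
    (h : ∀ a, (matrixQuadForm c a).im = 0) (n m : α) : c m n = conj (c n m) := by
  have hdiag := im_eq_zero_of_forall_im_matrixQuadForm_eq_zero c h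
  rcases eq_or_ne n m with rfl | hnm
  · exact Complex.ext (by simp) (by simp [hdiag n])
  · have h₁ := h (Finsupp.single n 1 + Finsupp.single m 1)
    have h₂ := h (Finsupp.single n 1 + Finsupp.single m Complex.I)
    rw [matrixQuadForm_single_add_single c hnm] at h₁ h₂
    simp only [map_one, one_mul, mul_one, Complex.conj_I, Complex.add_im, Complex.mul_im,
      Complex.neg_re, Complex.neg_im, Complex.I_re, Complex.I_im, Complex.mul_re] at h₁ h₂
    have := hdiag n
    have := hdiag m
    apply Complex.ext <;> simp only [Complex.conj_re, Complex.conj_im] <;> linarith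

lemma matrixQuadForm_smul (s : ℂ) (a : α →₀ ℂ) :
    matrixQuadForm c (s • a) = ((‖s‖ ^ 2 : ℝ) : ℂ) * matrixQuadForm c a := by
  rw [matrixQuadForm_eq_sum c Finsupp.support_smul, matrixQuadForm_eq_sum c subset_rfl,
    Complex.ofReal_pow, ← Complex.conj_mul', Finset.mul_sum]
  refine Finset.sum_congr rfl fun n _ => ?_
  rw [Finset.mul_sum]
  refine Finset.sum_congr rfl fun m _ => ?_
  simp only [Finsupp.smul_apply, smul_eq_mul, map_mul]
  ring

lemma matrixQuadForm_nonneg_of_normalized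
    (h : ∀ a : α →₀ ℂ, (a.sum fun _ x => ‖x‖ ^ 2) = 1 → 0 ≤ matrixQuadForm c a)
    (a : α →₀ ℂ) : 0 ≤ matrixQuadForm c a := by
  rcases eq_or_ne a 0 with rfl | ha
  · simp [matrixQuadForm]
  set t : ℝ := a.sum fun _ x => ‖x‖ ^ 2
  have ht : 0 < t := Finset.sum_pos' (fun i _ => by positivity) <|
    let ⟨i, hi⟩ := Finsupp.support_nonempty_iff.mpr ha
    ⟨i, hi, pow_pos (norm_pos_iff.mpr (Finsupp.mem_support_iff.mp hi)) 2⟩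
  set s : ℂ := (((√t)⁻¹ : ℝ) : ℂ)
  have hs : ‖s‖ ^ 2 = t⁻¹ := by
    rw [Complex.norm_real, Real.norm_eq_abs, sq_abs, inv_pow, Real.sq_sqrt ht.le]
  have hsa := h (s • a) (by rw [Finsupp.sum_norm_sq_smul, hs, inv_mul_cancel₀ ht.ne'])
  rw [matrixQuadForm_smul, hs] at hsa
  calc (0 : ℂ) ≤ (t : ℂ) * ((t⁻¹ : ℝ) * matrixQuadForm c a) :=
        mul_nonneg (Complex.zero_le_real.mpr ht.le) hsa
    _ = matrixQuadForm c a := by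
        rw [← mul_assoc, ← Complex.ofReal_mul, mul_inv_cancel₀ ht.ne', Complex.ofReal_one, one_mul]

end QuadForm

section Density

variable (c : ℕ → ℕ → ℂ)

lemma phaseDensity_eq_sum {a : ℕ →₀ ℂ} {s : Finset ℕ} (hs : a.support ⊆ s) (θ : ℝ) :
    phaseDensity c a θ = ∑ n ∈ s, ∑ m ∈ s,
      c n m * Complex.exp (Complex.I * ((n : ℂ) - (m : ℂ)) * (θ : ℂ)) * conj (a n) * a m := by
  rw [phaseDensity, Finsupp.sum_of_support_subset a hs _ (by simp)]
  exact Finset.sum_congr rfl fun n _ => Finsupp.sum_of_support_subset a hs _ (by simp)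

lemma phaseDensity_zero (a : ℕ →₀ ℂ) : phaseDensity c a 0 = matrixQuadForm c a := by
  rw [phaseDensity_eq_sum c subset_rfl, matrixQuadForm_eq_sum c subset_rfl]
  refine Finset.sum_congr rfl fun n _ => Finset.sum_congr rfl fun m _ => ?_
  simp only [Complex.ofReal_zero, mul_zero, Complex.exp_zero]
  ring

lemma continuous_phaseDensity (a : ℕ →₀ ℂ) : Continuous (phaseDensity c a) := by
  simp only [funext (phaseDensity_eq_sum c (subset_refl a.support))]
  fun_prop

lemma phaseDensity_single_one (n : ℕ) (θ : ℝ) :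
    phaseDensity c (Finsupp.single n 1) θ = c n n := by
  rw [phaseDensity, Finsupp.sum_single_index (by simp), Finsupp.sum_single_index (by simp)]
  simp

end Density

lemma mem_of_ae_restrict_Ico_mem {α : Type*} [TopologicalSpace α] {μ : Measure ℝ}
    [μ.IsOpenPosMeasure] {f : ℝ → α} {s : Set α} (hf : Continuous f) (hs : IsClosed s)
    {a b : ℝ} (hab : a < b) (h : ∀ᵐ x ∂μ.restrict (Ico a b), f x ∈ s) : f a ∈ s := by
  have hnull : μ (Ioo a b ∩ f ⁻¹' sᶜ) = 0 := by
    refine measure_mono_null (fun x hx => ?_)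
      (ae_iff.mp ((ae_restrict_iff' measurableSet_Ico).mp h))
    exact fun hxs => hx.2 (hxs (Ioo_subset_Ico_self hx.1))
  have hempty := (isOpen_Ioo.inter (hs.isOpen_compl.preimage hf)).eq_empty_of_measure_zero hnull
  have hIoo : Ioo a b ⊆ f ⁻¹' s := fun x hx => by_contra fun hxs => hempty.subset ⟨hx, hxs⟩
  have hIcc := ((hs.preimage hf).closure_subset_iff.mpr hIoo)
  rw [closure_Ioo hab.ne] at hIcc
  exact hIcc (left_mem_Icc.mpr hab.le)

lemma one_div_two_pi_mul_setIntegral_Ico_const (z : ℂ) :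
    ((1 / (2 * π) : ℝ) : ℂ) * ∫ _ in Ico (0 : ℝ) (2 * π), z = z := by
  rw [setIntegral_const, measureReal_def, Real.volume_Ico, sub_zero,
    ENNReal.toReal_ofReal two_pi_pos.le, Complex.real_smul, ← mul_assoc, ← Complex.ofReal_mul,
    one_div_mul_cancel two_pi_pos.ne', Complex.ofReal_one, one_mul]

/-- **Necessity: positivity and normalization of the densities force a phase matrix.**
If for every finitely supported `a : ℕ → ℂ` with `∑_n |a_n|² = 1` the function
`θ ↦ ∑_{n,m} c_{n,m} e^{i(n-m)θ} conj(a_n) a_m` is a.e. nonnegative on `[0,2π)` and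
normalized, `(2π)⁻¹ ∫₀^{2π} ∑_{n,m} c_{n,m} e^{i(n-m)θ} conj(a_n) a_m dθ = 1`, then
`c` is a phase matrix: it is positive semidefinite, hermitian, and `c_{n,n} = 1`. -/
theorem phase_matrix_of_prob_densities
    (c : ℕ → ℕ → ℂ)
    (h : ∀ a : ℕ →₀ ℂ, (a.sum fun _ x => ‖x‖ ^ 2) = 1 →
      (∀ᵐ θ ∂(volume.restrict (Ico (0 : ℝ) (2 * π))), 0 ≤ phaseDensity c a θ) ∧
      ((1 / (2 * π) : ℝ) : ℂ) * ∫ θ in Ico (0 : ℝ) (2 * π), phaseDensity c a θ = 1) :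
    (∀ a : ℕ →₀ ℂ, 0 ≤ a.sum fun n an => a.sum fun m am => conj an * c n m * am) ∧
    (∀ n m : ℕ, c m n = conj (c n m)) ∧
    (∀ n : ℕ, c n n = 1) := by
  have hpos : ∀ a, 0 ≤ matrixQuadForm c a := by
    refine matrixQuadForm_nonneg_of_normalized c fun a ha => ?_
    rw [← phaseDensity_zero]
    exact mem_of_ae_restrict_Ico_mem (continuous_phaseDensity c a) isClosed_Ici two_pi_pos
      (h a ha).1
  refine ⟨hpos, conj_eq_of_forall_im_matrixQuadForm_eq_zero c fun a =>
    (Complex.nonneg_iff.mp (hpos a)).2.symm, fun n => ?_⟩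
  have hnorm := (h (Finsupp.single n 1) (by simp)).2
  simpa only [phaseDensity_single_one, one_div_two_pi_mul_setIntegral_Ico_const] using hnorm
end

section
/- Let c : ℕ × ℕ → ℂ be a phase matrix. Then for every finitely supported sequence a : ℕ → ℂ with ∑_n |a_n|² = 1, the function θ ↦ ∑_{n,m} c_{n,m} e^{i(n-m)θ} conj(a_n) a_m takes nonnegative real values for every θ ∈ ℝ, and (2π)^{-1} ∫_0^{2π} ∑_{n,m} c_{n,m} e^{i(n-m)θ} conj(a_n) a_m dθ = 1. -/
open MeasureTheory Real Set
open scoped ComplexConjugate ComplexOrder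

/-- A phase matrix: a positive semidefinite matrix `c : ℕ × ℕ → ℂ` with unit diagonal. -/
def IsPhaseMatrix (c : ℕ → ℕ → ℂ) : Prop :=
  (∀ a : ℕ →₀ ℂ, 0 ≤ a.sum fun n an => a.sum fun m am => conj an * c n m * am) ∧
  (∀ n : ℕ, c n n = 1)

lemma key_int (n m : ℕ) :
    ∫ θ in Ico (0:ℝ) (2*π), Complex.exp (Complex.I * ((n:ℂ)-(m:ℂ)) * (θ:ℂ)) =
      if n = m then ((2*π : ℝ) : ℂ) else 0 := by
  rw [setIntegral_congr_set Ico_ae_eq_Ioc,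
    ← intervalIntegral.integral_of_le (by positivity : (0:ℝ) ≤ 2*π)]
  by_cases h : n = m
  · subst h
    simp [Complex.exp_zero]
  · have hne : Complex.I * ((n:ℂ)-(m:ℂ)) ≠ 0 := by
      simp [Complex.I_ne_zero, sub_eq_zero, Nat.cast_injective.eq_iff, h]
    rw [if_neg h, integral_exp_mul_complex hne]
    have h1 : Complex.exp (Complex.I * ((n:ℂ)-(m:ℂ)) * (2*π:ℝ)) = 1 := by
      have := Complex.exp_int_mul_two_pi_mul_I ((n:ℤ) - m)
      rw [← this]
      push_cast
      ring_nf
    rw [h1]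
    simp

noncomputable def twist (a : ℕ →₀ ℂ) (θ : ℝ) : ℕ →₀ ℂ :=
  ⟨a.support, fun n => a n * Complex.exp (-(Complex.I * n * θ)), by
    intro n
    simp [Finsupp.mem_support_iff, Complex.exp_ne_zero]⟩

/-- **Sufficiency: every phase matrix yields genuine phase probability densities.**
If `c` is a phase matrix, then for every finitely supported `a : ℕ → ℂ` with
`∑_n |a_n|² = 1`, the function `θ ↦ ∑_{n,m} c_{n,m} e^{i(n-m)θ} conj(a_n) a_m`
is nonnegative (real) for every `θ ∈ ℝ` and satisfies
`(2π)⁻¹ ∫₀^{2π} ∑_{n,m} c_{n,m} e^{i(n-m)θ} conj(a_n) a_m dθ = 1`. -/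
theorem phase_matrix_gives_prob_densities
    (c : ℕ → ℕ → ℂ) (hc : IsPhaseMatrix c) :
    ∀ a : ℕ →₀ ℂ, (a.sum fun _ x => ‖x‖ ^ 2) = 1 →
      (∀ θ : ℝ, 0 ≤ phaseDensity c a θ) ∧
      ((1 / (2 * π) : ℝ) : ℂ) * ∫ θ in Ico (0 : ℝ) (2 * π), phaseDensity c a θ = 1 := by
  intro a ha
  constructor
  · intro θ
    have h := hc.1 (twist a θ)
    have heq : ((twist a θ).sum fun n an => (twist a θ).sum fun m am =>
        conj an * c n m * am) = phaseDensity c a θ := by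
      unfold phaseDensity Finsupp.sum
      have hsupp : (twist a θ).support = a.support := rfl
      rw [hsupp]
      refine Finset.sum_congr rfl fun n _ => Finset.sum_congr rfl fun m _ => ?_
      have htw : ∀ k : ℕ, (twist a θ) k = a k * Complex.exp (-(Complex.I * k * θ)) := fun k => rfl
      rw [htw, htw]
      have hconj : conj (Complex.exp (-(Complex.I * (n:ℂ) * θ))) =
          Complex.exp (Complex.I * n * θ) := by
        rw [← Complex.exp_conj]
        congr 1
        simp [Complex.conj_I, mul_comm]
      rw [map_mul, hconj]
      have hexp : Complex.exp (Complex.I * (n:ℂ) * θ) * Complex.exp (-(Complex.I * (m:ℂ) * θ)) =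
          Complex.exp (Complex.I * ((n:ℂ) - m) * θ) := by
        rw [← Complex.exp_add]
        ring_nf
      beta_reduce
      rw [← hexp]
      ring
    rw [← heq]
    exact h
  · have hint : ∀ n m : ℕ, ∫ θ in Ico (0:ℝ) (2*π),
        c n m * Complex.exp (Complex.I * ((n:ℂ) - m) * (θ:ℂ)) * conj (a n) * a m =
        (c n m * conj (a n) * a m) * if n = m then ((2*π:ℝ):ℂ) else 0 := by
      intro n m
      have : ∀ θ : ℝ, c n m * Complex.exp (Complex.I * ((n:ℂ) - m) * (θ:ℂ)) * conj (a n) * a m =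
          (c n m * conj (a n) * a m) * Complex.exp (Complex.I * ((n:ℂ) - m) * (θ:ℂ)) := by
        intro θ; ring
      simp_rw [this]
      rw [MeasureTheory.integral_const_mul, key_int]
    have hInteg : ∀ n m : ℕ, IntegrableOn (fun θ : ℝ =>
        c n m * Complex.exp (Complex.I * ((n:ℂ) - m) * (θ:ℂ)) * conj (a n) * a m)
        (Ico (0:ℝ) (2*π)) volume := by
      intro n m
      apply (Continuous.integrableOn_Icc ?_).mono_set Ico_subset_Icc_self
      fun_prop
    unfold phaseDensity Finsupp.sum
    rw [MeasureTheory.integral_finset_sum _ (fun n _ => MeasureTheory.integrable_finset_sum _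
      (fun m _ => hInteg n m))]
    simp_rw [MeasureTheory.integral_finset_sum _ (fun m (_ : m ∈ a.support) => hInteg _ m), hint]
    have hdiag : ∀ n ∈ a.support, (∑ m ∈ a.support,
        (c n m * conj (a n) * a m) * if n = m then ((2*π:ℝ):ℂ) else 0)
        = ((‖a n‖^2 : ℝ) : ℂ) * ((2*π:ℝ):ℂ) := by
      intro n hn
      rw [Finset.sum_eq_single n]
      · rw [if_pos rfl, hc.2 n, one_mul, Complex.conj_mul']
        norm_cast
      · intro m _ hm
        rw [if_neg (Ne.symm hm), mul_zero]
      · intro hn'; exact (hn' hn).elim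
    rw [Finset.sum_congr rfl hdiag, ← Finset.sum_mul, ← Complex.ofReal_sum]
    have : (∑ n ∈ a.support, (‖a n‖^2 : ℝ)) = 1 := ha
    rw [this]
    have hπ : (π : ℝ) ≠ 0 := Real.pi_ne_zero
    push_cast
    field_simp
end

section
/- Let c : ℕ × ℕ → ℂ be a phase matrix. Then ∑_{n=0}^s ∑_{m=0}^s c_{n,m} = (s+1)² holds for every s ∈ ℕ if and only if c_{n,m} = 1 for all n, m ∈ ℕ. -/
open scoped ComplexConjugate ComplexOrder

/-- The quadratic form inequality for a PSD matrix, specialized to two indices. -/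
lemma phase_quad_form (c : ℕ → ℕ → ℂ)
    (hpsd : ∀ a : ℕ →₀ ℂ, 0 ≤ a.sum fun n an => a.sum fun m am => conj an * c n m * am)
    (n m : ℕ) (x y : ℂ) :
    0 ≤ conj x * c n n * x + conj x * c n m * y + conj y * c m n * x + conj y * c m m * y := by
  rcases eq_or_ne n m with rfl | hnm
  · have h2 := hpsd (Finsupp.single n (x + y))
    rw [Finsupp.sum_single_index (by simp), Finsupp.sum_single_index (by simp)] at h2
    convert h2 using 1
    simp only [map_add]
    ring
  · have h := hpsd (Finsupp.single n x + Finsupp.single m y)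
    have hinner : ∀ (v : ℂ) (k : ℕ),
        ((Finsupp.single n x + Finsupp.single m y).sum fun l al => conj v * c k l * al)
          = conj v * c k n * x + conj v * c k m * y := by
      intro v k
      rw [Finsupp.sum_add_index (by simp) (by intros; ring),
        Finsupp.sum_single_index (by simp), Finsupp.sum_single_index (by simp)]
    rw [Finsupp.sum_add_index (by simp [hinner])
        (by intro a _ b₁ b₂
            simp only [map_add, add_mul]
            rw [Finsupp.sum_add]),
      Finsupp.sum_single_index (by simp [hinner]), Finsupp.sum_single_index (by simp [hinner]),
      hinner, hinner] at h
    convert h using 1; ring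

/-- A phase matrix is Hermitian. -/
lemma phase_herm (c : ℕ → ℕ → ℂ)
    (hq : ∀ (n m : ℕ) (x y : ℂ),
      0 ≤ conj x * c n n * x + conj x * c n m * y + conj y * c m n * x + conj y * c m m * y)
    (hd : ∀ n, c n n = 1) (n m : ℕ) : c m n = conj (c n m) := by
  have h1 := hq n m 1 1
  have h2 := hq n m 1 Complex.I
  rw [Complex.le_def] at h1 h2
  simp [hd, Complex.add_im, Complex.mul_im, Complex.ext_iff, Complex.conj_re,
    Complex.conj_im] at h1 h2 ⊢
  constructor <;> nlinarith [h1.2, h2.2]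

/-- The entries of a phase matrix have modulus at most one. -/
lemma phase_normSq_le (c : ℕ → ℕ → ℂ)
    (hq : ∀ (n m : ℕ) (x y : ℂ),
      0 ≤ conj x * c n n * x + conj x * c n m * y + conj y * c m n * x + conj y * c m m * y)
    (hd : ∀ n, c n n = 1) (hherm : ∀ n m, c m n = conj (c n m)) (n m : ℕ) :
    Complex.normSq (c n m) ≤ 1 := by
  have h := hq n m (-(c n m)) 1
  rw [Complex.le_def] at h
  simp [hd, hherm n m, Complex.normSq_apply, Complex.ext_iff, Complex.mul_re,
    Complex.mul_im] at h ⊢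
  nlinarith [h.1]

/-- **The canonical phase is the unique phase observable with the sharpest kernel:**
for a phase matrix `c`, one has `∑_{n,m=0}^s c_{n,m} = (s+1)²` for every `s ∈ ℕ`
if and only if `c_{n,m} = 1` for all `n, m`. -/
theorem phase_matrix_kernel_eq_iff_canonical
    (c : ℕ → ℕ → ℂ) (hc : IsPhaseMatrix c) :
    (∀ s : ℕ, (∑ n ∈ Finset.range (s + 1), ∑ m ∈ Finset.range (s + 1), c n m)
        = (((s : ℂ) + 1) ^ 2))
      ↔ (∀ n m : ℕ, c n m = 1) := by
  obtain ⟨hpsd, hd⟩ := hc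
  have hq := phase_quad_form c hpsd
  have hherm := phase_herm c hq hd
  have hnormsq := phase_normSq_le c hq hd hherm
  constructor
  · intro hs n m
    set s := max n m with hsdef
    have h := hs s
    rw [← Finset.sum_product'] at h
    have hre : ∑ p ∈ Finset.range (s+1) ×ˢ Finset.range (s+1), (c p.1 p.2).re
        = ∑ p ∈ Finset.range (s+1) ×ˢ Finset.range (s+1), (1:ℝ) := by
      have := congrArg Complex.re h
      rw [Complex.re_sum] at this
      rw [this]
      simp [Finset.sum_const]
      norm_num [Complex.add_re, Complex.add_im, pow_two, Complex.mul_re]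
    have hle : ∀ p ∈ Finset.range (s+1) ×ˢ Finset.range (s+1), (c p.1 p.2).re ≤ (1:ℝ) := by
      intro p _
      nlinarith [hnormsq p.1 p.2, Complex.normSq_apply (c p.1 p.2), sq_nonneg (c p.1 p.2).im]
    have hmem : (n, m) ∈ Finset.range (s+1) ×ˢ Finset.range (s+1) := by
      simp only [Finset.mem_product, Finset.mem_range, Nat.lt_succ_iff]
      exact ⟨le_sup_left, le_sup_right⟩
    have heq := (Finset.sum_eq_sum_iff_of_le hle).mp hre (n, m) hmem
    have hre1 : (c n m).re = 1 := by simpa using heq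
    have him : (c n m).im = 0 := by
      have := hnormsq n m
      rw [Complex.normSq_apply] at this
      nlinarith [sq_nonneg (c n m).im]
    exact Complex.ext (by simpa using hre1) (by simpa using him)
  · intro h1 s
    simp only [h1, Finset.sum_const, Finset.card_range, nsmul_eq_mul, mul_one]
    push_cast
    ring
end

section
/- Let ψ ∈ L²([0,2π),ℂ) satisfy the Hardy condition, with coefficients d_n := (2π)^{-1}∫_0^{2π} ψ(θ) e^{inθ} dθ for n ≥ 0 (so ψ(θ) = ∑_{n≥0} d_n e^{-inθ} in L²). Then for every n ∈ ℕ, (2π)^{-1} ∫_0^{2π} θ ψ(θ) e^{inθ} dθ = π d_n + ∑_{m∈ℕ, m≠n} (i/(m−n)) d_m, where the series on the right converges. -/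
/-!
Multiplication by `θ` acts on Fourier coefficients as convolution with the coefficients of the
sawtooth `θ ↦ θ` on `[0, 2π)`, which are `π` at `0` and `i / k` at `k ≠ 0`: this is Parseval's
identity for the pair `θ ↦ ψ(θ) e^{inθ}` and `θ ↦ θ`. The Hardy condition kills the coefficients
of `ψ` of negative index, which leaves a sum over `ℕ`, and the diagonal term `π d_n` is split off.
-/

open MeasureTheory Real Set

open AddCircle Complex ComplexConjugate

namespace AddCircle

variable {T : ℝ} [hT : Fact (0 < T)]

theorem fourierCoeff_conj (f : AddCircle T → ℂ) (n : ℤ) :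
    fourierCoeff (fun t ↦ conj (f t)) n = conj (fourierCoeff f (-n)) := by
  simp only [fourierCoeff, smul_eq_mul, ← integral_conj, map_mul, fourier_neg, neg_neg]

theorem hasSum_conj_fourierCoeff_mul (f g : Lp ℂ 2 (@haarAddCircle T hT)) :
    HasSum (fun i ↦ conj (fourierCoeff f i) * fourierCoeff g i)
      (∫ t, conj (f t) * g t ∂haarAddCircle) := by
  simp_rw [mul_comm (conj _)]
  refine (fourierBasis.hasSum_inner_mul_inner f g).congr_fun fun n ↦ ?_
  simp only [← fourierBasis_repr, HilbertBasis.repr_apply_apply, inner_conj_symm,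
    mul_comm (inner ℂ f _)]

theorem hasSum_fourierCoeff_neg_mul {f g : AddCircle T → ℂ} (hf : MemLp f 2 haarAddCircle)
    (hg : MemLp g 2 haarAddCircle) :
    HasSum (fun i ↦ fourierCoeff f (-i) * fourierCoeff g i) (∫ t, f t * g t ∂haarAddCircle) := by
  have hf' : MemLp (fun t ↦ conj (f t)) 2 haarAddCircle := hf.star
  convert hasSum_conj_fourierCoeff_mul hf'.toLp hg.toLp using 1
  · ext i
    rw [fourierCoeff_congr_ae hf'.coeFn_toLp, fourierCoeff_congr_ae hg.coeFn_toLp,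
      fourierCoeff_conj, conj_conj]
  · refine integral_congr_ae ?_
    filter_upwards [hf'.coeFn_toLp, hg.coeFn_toLp] with t hft hgt
    rw [hft, hgt, conj_conj]

end AddCircle

theorem hasSum_fourierCoeffOn_neg_mul {a b : ℝ} (hab : a < b) {f g : ℝ → ℂ}
    (hf : MemLp f 2 (volume.restrict (Ioc a b))) (hg : MemLp g 2 (volume.restrict (Ioc a b))) :
    HasSum (fun i ↦ fourierCoeffOn hab f (-i) * fourierCoeffOn hab g i)
      ((b - a)⁻¹ • ∫ x in a..b, f x * g x) := by
  have := Fact.mk (sub_pos.2 hab)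
  rw [← add_sub_cancel a b] at hf hg
  convert hasSum_fourierCoeff_neg_mul hf.memLp_liftIoc.haarAddCircle
    hg.memLp_liftIoc.haarAddCircle using 1
  -- `fourierCoeffOn` is by definition the Fourier coefficient of the `liftIoc` lift
  · rfl
  nth_rw 2 [← add_sub_cancel a b]
  rw [integral_haarAddCircle, ← integral_liftIoc_eq_intervalIntegral]
  rfl

theorem fourierCoeffOn_const {a b : ℝ} (hab : a < b) (c : ℂ) {n : ℤ} (hn : n ≠ 0) :
    fourierCoeffOn hab (fun _ ↦ c) n = 0 := by
  rw [fourierCoeffOn_of_hasDerivAt hab hn (fun x _ ↦ hasDerivAt_const x c)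
    intervalIntegrable_const]
  simp [fourierCoeffOn_eq_integral]

theorem fourierCoeffOn_ofReal_zero {T : ℝ} (hT : 0 < T) :
    fourierCoeffOn hT (fun x : ℝ ↦ (x : ℂ)) 0 = T / 2 := by
  simp only [fourierCoeffOn_eq_integral, neg_zero, fourier_zero, one_smul]
  rw [intervalIntegral.integral_ofReal (f := fun x ↦ x), integral_id, real_smul]
  push_cast
  norm_num
  field_simp

theorem fourierCoeffOn_ofReal_of_ne_zero {T : ℝ} (hT : 0 < T) {n : ℤ} (hn : n ≠ 0) :
    fourierCoeffOn hT (fun x : ℝ ↦ (x : ℂ)) n = T * I / (2 * π * n) := by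
  rw [fourierCoeffOn_of_hasDerivAt (f' := fun _ ↦ 1) hT hn
    (fun x _ ↦ (hasDerivAt_id' x).ofReal_comp) intervalIntegrable_const,
    fourierCoeffOn_const hT _ hn, QuotientAddGroup.mk_zero, fourier_eval_zero]
  push_cast
  field_simp
  rw [I_sq]
  ring

-- The coefficient `d_k` of the paper, for `f = ψ`.
noncomputable def phaseCoeff (f : ℝ → ℂ) (k : ℤ) : ℂ :=
  ((1 / (2 * π) : ℝ) : ℂ) * ∫ θ in Ico 0 (2 * π), f θ * exp (I * k * θ)

theorem phaseCoeff_eq_fourierCoeffOn (f : ℝ → ℂ) (k : ℤ) :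
    phaseCoeff f k = fourierCoeffOn two_pi_pos f (-k) := by
  rw [fourierCoeffOn_eq_integral, intervalIntegral.integral_of_le two_pi_pos.le,
    ← integral_Ico_eq_integral_Ioc, sub_zero, Complex.real_smul, phaseCoeff]
  congr 1
  refine setIntegral_congr_fun measurableSet_Ico fun θ _ ↦ ?_
  rw [neg_neg, fourier_coe_apply, smul_eq_mul, mul_comm]
  congr 2
  push_cast
  field_simp

theorem phaseCoeff_mul_exp (f : ℝ → ℂ) (n k : ℤ) :
    phaseCoeff (fun θ ↦ f θ * exp (I * n * θ)) k = phaseCoeff f (n + k) := by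
  unfold phaseCoeff
  congr 1
  refine setIntegral_congr_fun measurableSet_Ico fun θ _ ↦ ?_
  rw [mul_assoc, ← Complex.exp_add]
  push_cast
  ring_nf

theorem hasSum_phaseCoeff_mul_fourierCoeffOn {f g : ℝ → ℂ}
    (hf : MemLp f 2 (volume.restrict (Ioc 0 (2 * π))))
    (hg : MemLp g 2 (volume.restrict (Ioc 0 (2 * π)))) :
    HasSum (fun k ↦ phaseCoeff f k * fourierCoeffOn two_pi_pos g k)
      (((1 / (2 * π) : ℝ) : ℂ) * ∫ θ in Ico 0 (2 * π), f θ * g θ) := by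
  simp only [phaseCoeff_eq_fourierCoeffOn]
  convert hasSum_fourierCoeffOn_neg_mul two_pi_pos hf hg using 1
  rw [intervalIntegral.integral_of_le two_pi_pos.le, ← integral_Ico_eq_integral_Ioc,
    sub_zero, Complex.real_smul, one_div]

theorem memLp_ofReal_restrict_Ioc (p : ENNReal) (a b : ℝ) :
    MemLp (fun x : ℝ ↦ (x : ℂ)) p (volume.restrict (Ioc a b)) := by
  refine MemLp.of_bound (by fun_prop) (max |a| |b|) ?_
  filter_upwards [ae_restrict_mem measurableSet_Ioc] with x hx
  rw [norm_real, norm_eq_abs]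
  exact abs_le_max_abs_abs hx.1.le hx.2

theorem hasSum_natCast_iff_of_neg_eq_zero {M : Type*} [AddCommMonoid M] [TopologicalSpace M]
    {f : ℤ → M} {a : M} (hf : ∀ k < 0, f k = 0) :
    HasSum (fun n : ℕ ↦ f n) a ↔ HasSum f a :=
  Nat.cast_injective.hasSum_iff fun k hk ↦ hf k <| by
    contrapose! hk
    exact ⟨k.toNat, Int.toNat_of_nonneg hk⟩

theorem hasSum_phaseCoeff_mul_fourierCoeffOn_ofReal {ψ : ℝ → ℂ}
    (hψ : MemLp ψ 2 (volume.restrict (Ioc 0 (2 * π)))) (n : ℤ) :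
    HasSum (fun k ↦ phaseCoeff ψ k * fourierCoeffOn two_pi_pos (fun x ↦ (x : ℂ)) (k - n))
      (phaseCoeff (fun θ ↦ θ * ψ θ) n) := by
  have hF : MemLp (fun θ ↦ ψ θ * exp (I * n * θ)) 2 (volume.restrict (Ioc 0 (2 * π))) :=
    hψ.of_le (hψ.1.mul (by fun_prop)) (ae_of_all _ fun θ ↦ by simp [norm_exp])
  have hsum := hasSum_phaseCoeff_mul_fourierCoeffOn hF (memLp_ofReal_restrict_Ioc 2 0 _)
  rw [← (Equiv.subRight n).hasSum_iff] at hsum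
  simp only [Function.comp_def, Equiv.subRight_apply, phaseCoeff_mul_exp, add_sub_cancel] at hsum
  convert hsum using 2
  unfold phaseCoeff
  congr 2 with θ
  ring

/-- **The Garrison–Wong operator acts as the Toeplitz operator `ψ ↦ P(Qψ)`.**
Let `ψ ∈ L²([0,2π),ℂ)` satisfy the Hardy condition, with Fourier coefficients
`d_n = (2π)⁻¹ ∫₀^{2π} ψ(θ) e^{inθ} dθ` for `n ∈ ℕ`.  Then for every `n ∈ ℕ`,
`(2π)⁻¹ ∫₀^{2π} θ ψ(θ) e^{inθ} dθ = π d_n + ∑_{m≠n} (i/(m-n)) d_m`,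
the series on the right converging. -/
theorem garrison_wong_toeplitz_action
    (ψ : ℝ → ℂ) (hmeas : Measurable ψ)
    (hL2 : IntegrableOn (fun θ => ‖ψ θ‖ ^ 2) (Ico 0 (2 * π)))
    (hHardy : ∀ n : ℤ, n < 0 →
      ∫ θ in Ico (0 : ℝ) (2 * π), ψ θ * Complex.exp (Complex.I * (n : ℂ) * (θ : ℂ)) = 0)
    (d : ℕ → ℂ)
    (hd : ∀ n : ℕ, d n = ((1 / (2 * π) : ℝ) : ℂ) *
      ∫ θ in Ico (0 : ℝ) (2 * π), ψ θ * Complex.exp (Complex.I * (n : ℂ) * (θ : ℂ))) :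
    ∀ n : ℕ,
      HasSum (fun m : ℕ => if m = n then 0 else (Complex.I / ((m : ℂ) - (n : ℂ))) * d m)
        (((1 / (2 * π) : ℝ) : ℂ) *
          (∫ θ in Ico (0 : ℝ) (2 * π),
            (θ : ℂ) * ψ θ * Complex.exp (Complex.I * (n : ℂ) * (θ : ℂ)))
          - (π : ℂ) * d n) := by
  intro n
  have hd' (m : ℕ) : d m = phaseCoeff ψ m := by simpa [phaseCoeff] using hd m
  have hψ : MemLp ψ 2 (volume.restrict (Ioc 0 (2 * π))) := by
    rwa [memLp_two_iff_integrable_sq_norm hmeas.aestronglyMeasurable,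
      ← Measure.restrict_congr_set Ico_ae_eq_Ioc]
  have hsum := (hasSum_natCast_iff_of_neg_eq_zero fun k hk ↦ by simp [phaseCoeff, hHardy k hk]).2
    (hasSum_phaseCoeff_mul_fourierCoeffOn_ofReal hψ n)
  have hdiag : phaseCoeff ψ n * fourierCoeffOn two_pi_pos (fun x ↦ (x : ℂ)) (n - n) = π * d n := by
    rw [sub_self, fourierCoeffOn_ofReal_zero, hd']
    push_cast
    ring
  have hupd := hsum.update n 0
  rw [hdiag, zero_sub, neg_add_eq_sub] at hupd
  refine hupd.congr_fun fun m ↦ ?_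
  rcases eq_or_ne m n with rfl | hmn
  · simp
  · have hmn' : (m : ℤ) - n ≠ 0 := sub_ne_zero.2 (by exact_mod_cast hmn)
    rw [Function.update_of_ne hmn, if_neg hmn, hd', fourierCoeffOn_ofReal_of_ne_zero _ hmn']
    push_cast
    field_simp
end

section
/- Let c : ℕ × ℕ → ℂ be a phase matrix of rank one, in the sense that c_{n,m} c_{k,l} = c_{n,l} c_{k,m} for all n, m, k, l ∈ ℕ. Then there exists a sequence z : ℕ → ℂ with |z_n| = 1 for all n such that c_{n,m} = conj(z_n) z_m for all n, m ∈ ℕ. -/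
/-!
A positive semidefinite complex matrix is Hermitian, since its quadratic form takes real values.
With `c₀₀ = 1`, the rank-one identity gives `c_{nm} = c_{n0} c_{0m} = conj (c_{0n}) c_{0m}`, so
`z_n = c_{0n}` works, and on the diagonal it reads `1 = |c_{0n}|²`.
-/

open scoped ComplexConjugate ComplexOrder

namespace Matrix

open Finsupp (sum_add_index' sum_single_index)

variable {ι : Type*}

lemma sum_single_add_single_conj_mul_mul (M : Matrix ι ι ℂ) (i j : ι) (x y : ℂ) :
    ((Finsupp.single i x + Finsupp.single j y).sum fun k a =>
        (Finsupp.single i x + Finsupp.single j y).sum fun l b => conj a * M k l * b) =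
      conj x * M i i * x + conj x * M i j * y + (conj y * M j i * x + conj y * M j j * y) := by
  have inner (k : ι) (a : ℂ) :
      ((Finsupp.single i x + Finsupp.single j y).sum fun l b => conj a * M k l * b) =
        conj a * M k i * x + conj a * M k j * y := by
    rw [sum_add_index' (by simp) (by intros; ring), sum_single_index (by simp),
      sum_single_index (by simp)]
  simp only [inner]
  rw [sum_add_index' (by simp) (by intros; simp only [map_add]; ring), sum_single_index (by simp),
    sum_single_index (by simp)]

/-- The values of the quadratic form at `e_i`, `e_j + e_i` and `e_j + I e_i` are real. -/
lemma isHermitian_of_forall_sum_conj_mul_mul_nonneg {M : Matrix ι ι ℂ}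
    (hM : ∀ a : ι →₀ ℂ, 0 ≤ a.sum fun k ak => a.sum fun l al => conj ak * M k l * al) :
    M.IsHermitian := by
  have im_eq_zero (i j : ι) (x y : ℂ) :=
    (Complex.nonneg_iff.mp (M.sum_single_add_single_conj_mul_mul i j x y ▸
      hM (Finsupp.single i x + Finsupp.single j y))).2
  ext i j
  have hi := im_eq_zero i i 1 0
  have hj := im_eq_zero j j 1 0
  have h₁ := im_eq_zero j i 1 1
  have h₂ := im_eq_zero j i 1 Complex.I
  simp only [map_one, one_mul, mul_one, mul_zero, add_zero, map_zero, zero_mul, zero_add, zero_sub,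
    neg_mul, neg_neg, Complex.add_im, Complex.mul_im, Complex.mul_re, Complex.neg_im, Complex.conj_I,
    Complex.I_im, Complex.I_re] at hi hj h₁ h₂
  apply Complex.ext <;>
    simp only [conjTranspose_apply, RCLike.star_def, Complex.conj_re, Complex.conj_im] <;> linarith

lemma IsHermitian.apply_eq_conj_mul_of_rank_one {M : Matrix ι ι ℂ} (hM : M.IsHermitian) {i₀ : ι}
    (h₀ : M i₀ i₀ = 1) (hrank : ∀ i j k l, M i j * M k l = M i l * M k j) (i j : ι) :
    M i j = conj (M i₀ i) * M i₀ j := by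
  have h := hrank i i₀ i₀ j
  rw [h₀, mul_one, ← hM.apply i i₀] at h
  exact h.symm

end Matrix

/-- **Rank-one phase matrices.**  If `c` is a phase matrix of rank one, i.e.
`c_{n,m} c_{k,l} = c_{n,l} c_{k,m}` for all `n, m, k, l`, then there is a sequence
`z : ℕ → ℂ` of unimodular numbers with `c_{n,m} = conj(z_n) z_m` for all `n, m`. -/
theorem rank_one_phase_matrix
    (c : ℕ → ℕ → ℂ) (hc : IsPhaseMatrix c)
    (hrank : ∀ n m k l : ℕ, c n m * c k l = c n l * c k m) :
    ∃ z : ℕ → ℂ, (∀ n, ‖z n‖ = 1) ∧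
      ∀ n m : ℕ, c n m = conj (z n) * z m := by
  have hherm : Matrix.IsHermitian c := Matrix.isHermitian_of_forall_sum_conj_mul_mul_nonneg hc.1
  have hfactor : ∀ n m, c n m = conj (c 0 n) * c 0 m :=
    hherm.apply_eq_conj_mul_of_rank_one (hc.2 0) hrank
  refine ⟨c 0, fun n => ?_, hfactor⟩
  have hnorm_sq : ‖c 0 n‖ ^ 2 = 1 := by
    exact_mod_cast (Complex.conj_mul' (c 0 n)).symm.trans ((hfactor n n).symm.trans (hc.2 n))
  exact (pow_eq_one_iff_of_nonneg (norm_nonneg _) two_ne_zero).mp hnorm_sq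
end

section
/- Let c : ℕ × ℕ → ℂ. Then c is a phase matrix if and only if there exists a family (v_k)_{k∈ℕ} of unit vectors in the Hilbert space ℓ²(ℕ,ℂ) such that c_{k,l} = ⟨v_k, v_l⟩ for all k, l ∈ ℕ (inner product conjugate-linear in the first argument). -/
open scoped ComplexConjugate ComplexOrder

/-!
A complex matrix whose quadratic form is nonnegative is automatically Hermitian (polarization),
so a phase matrix is a positive semidefinite kernel on `ℕ` with unit diagonal. By Moore's theorem
(`RKHS.OfKernel`) such a kernel is the Gram matrix of a family `f` in a Hilbert space. Expanding
`f k` in the Gram–Schmidt orthonormalization `e` of `f`, only `e 0, …, e k` occur, so the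
coordinate sequences `n ↦ ⟪e n, f k⟫` are finitely supported vectors of `ℓ²(ℕ)` with the same
Gram matrix. Conversely, Gram matrices are positive semidefinite.
-/

open scoped InnerProductSpace lp

theorem inner_self_eq_one_iff {𝕜 E : Type*} [RCLike 𝕜] [SeminormedAddCommGroup E]
    [InnerProductSpace 𝕜 E] {x : E} : ⟪x, x⟫_𝕜 = 1 ↔ ‖x‖ = 1 := by
  rw [inner_self_eq_norm_sq_to_K]
  norm_cast
  exact pow_eq_one_iff_of_nonneg (norm_nonneg x) two_ne_zero

namespace Matrix

theorem posSemidef_iff_complex {n : Type*} {M : Matrix n n ℂ} :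
    M.PosSemidef ↔
      ∀ x : n →₀ ℂ, 0 ≤ x.sum fun i xi => x.sum fun j xj => star xi * M i j * xj := by
  refine ⟨fun hM => hM.2, fun hM => ⟨IsHermitian.ext fun i j => ?_, hM⟩⟩
  have two_point (a b : ℂ) :
      0 ≤ star a * M i i * a + star a * M i j * b + star b * M j i * a + star b * M j j * b := by
    convert hM (Finsupp.single i a + Finsupp.single j b) using 1
    simp only [RCLike.star_def, Finsupp.sum_add_index', Finsupp.sum_single_index, Finsupp.sum_add,
      map_add, map_zero, mul_add, add_mul, mul_zero, zero_mul, implies_true]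
    ring
  have hi := two_point 1 0
  have hj := two_point 0 1
  have h1 := two_point 1 1
  have hI := two_point 1 Complex.I
  simp only [Complex.nonneg_iff, star_one, star_zero, RCLike.star_def, Complex.conj_I, one_mul,
    mul_one, mul_zero, zero_mul, add_zero, zero_add, neg_mul, Complex.add_re, Complex.add_im,
    Complex.mul_re, Complex.mul_im, Complex.neg_re, Complex.neg_im, Complex.I_re, Complex.I_im,
    zero_sub, neg_neg] at hi hj h1 hI
  apply Complex.ext <;> simp only [RCLike.star_def, Complex.conj_re, Complex.conj_im] <;> linarith

universe u v

variable {𝕜 : Type u} [RCLike 𝕜] {X : Type v}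

theorem posSemidef_gram' {E : Type*} [SeminormedAddCommGroup E] [InnerProductSpace 𝕜 E]
    (f : X → E) : (gram 𝕜 f).PosSemidef := by
  refine ⟨isHermitian_gram 𝕜 f, fun x => ?_⟩
  have hx : (x.sum fun i xi => x.sum fun j xj => star xi * gram 𝕜 f i j * xj) =
      ⟪x.sum fun i xi => xi • f i, x.sum fun j xj => xj • f j⟫_𝕜 := by
    rw [Finsupp.sum_inner]
    refine Finsupp.sum_congr fun i _ => ?_
    rw [inner_smul_left, Finsupp.inner_sum, Finsupp.mul_sum]
    refine Finsupp.sum_congr fun j _ => ?_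
    rw [inner_smul_right, gram_apply, RCLike.star_def]
    ring
  rw [hx, RCLike.nonneg_iff]
  exact ⟨inner_self_nonneg, inner_self_im _⟩

theorem PosSemidef.map_algebraMap {M : Matrix X X 𝕜} (hM : M.PosSemidef) :
    (M.map (algebraMap 𝕜 (𝕜 →L[𝕜] 𝕜))).PosSemidef := by
  have criterion := (RKHS.posSemidef_tfae (K := M.map (algebraMap 𝕜 (𝕜 →L[𝕜] 𝕜)))).out 0 2
  rw [criterion]
  refine ⟨hM.isHermitian.map _ fun z => algebraMap_star_comm z, fun w => ?_⟩
  have hw :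
      (w.sum fun x a => w.sum fun x' b => ⟪M.map (algebraMap 𝕜 (𝕜 →L[𝕜] 𝕜)) x' x a, b⟫_𝕜) =
        w.sum fun x a => w.sum fun x' b => star a * M x x' * b :=
    Finsupp.sum_congr fun x _ => Finsupp.sum_congr fun x' _ => by
      simp [Algebra.algebraMap_eq_smul_one, ← hM.isHermitian.apply x x', mul_comm, mul_left_comm]
  rw [hw]
  exact (RCLike.nonneg_iff.mp (hM.2 w)).1

theorem PosSemidef.exists_eq_gram {M : Matrix X X 𝕜} (hM : M.PosSemidef) :
    ∃ (H : Type max u v) (_ : NormedAddCommGroup H) (_ : InnerProductSpace 𝕜 H) (f : X → H),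
      M = gram 𝕜 f := by
  have : Fact (M.map (algebraMap 𝕜 (𝕜 →L[𝕜] 𝕜))).PosSemidef := ⟨hM.map_algebraMap⟩
  let H := RKHS.OfKernel (M.map (algebraMap 𝕜 (𝕜 →L[𝕜] 𝕜)))
  refine ⟨H, inferInstance, inferInstance, fun x => RKHS.kerFun H x 1, ?_⟩
  ext x y
  rw [gram_apply, ← RKHS.kernel_inner, RKHS.OfKernel.kernel_ofKernel]
  simp [Algebra.algebraMap_eq_smul_one, ← hM.isHermitian.apply x y]

end Matrix

namespace InnerProductSpace

variable {𝕜 E ι : Type*} [RCLike 𝕜] [NormedAddCommGroup E] [InnerProductSpace 𝕜 E]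
  [LinearOrder ι] [LocallyFiniteOrderBot ι] [WellFoundedLT ι]

theorem inner_gramSchmidtNormed_eq_zero_of_lt (f : ι → E) {i j : ι} (hij : i < j) :
    ⟪gramSchmidtNormed 𝕜 f j, f i⟫_𝕜 = 0 := by
  simp [gramSchmidtNormed, inner_smul_left, gramSchmidt_inv_triangular 𝕜 f hij]

theorem inner_gramSchmidtNormed_eq_zero_of_ne (f : ι → E) {i j : ι} (hij : i ≠ j) :
    ⟪gramSchmidtNormed 𝕜 f i, gramSchmidtNormed 𝕜 f j⟫_𝕜 = 0 := by
  simp [gramSchmidtNormed, inner_smul_left, inner_smul_right, gramSchmidt_orthogonal 𝕜 f hij]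

theorem sum_inner_gramSchmidtNormed_smul_of_mem_span (f : ι → E) {s : Finset ι} {x : E}
    (hx : x ∈ Submodule.span 𝕜 (gramSchmidtNormed 𝕜 f '' s)) :
    ∑ n ∈ s, ⟪gramSchmidtNormed 𝕜 f n, x⟫_𝕜 • gramSchmidtNormed 𝕜 f n = x := by
  induction hx using Submodule.span_induction with
  | mem x hx =>
    obtain ⟨m, hm, rfl⟩ := hx
    rw [Finset.sum_eq_single_of_mem m hm fun n _ hnm => by
      rw [inner_gramSchmidtNormed_eq_zero_of_ne f hnm, zero_smul]]
    by_cases h0 : gramSchmidtNormed 𝕜 f m = 0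
    · simp [h0]
    · simp [inner_self_eq_norm_sq_to_K, gramSchmidtNormed_unit_length' h0]
  | zero => simp
  | add x y _ _ hx hy =>
    simp only [inner_add_right, add_smul, Finset.sum_add_distrib, hx, hy]
  | smul a x _ hx => simp only [inner_smul_right, mul_smul, ← Finset.smul_sum, hx]

theorem sum_inner_gramSchmidtNormed_smul (f : ι → E) (k : ι) :
    ∑ n ∈ Finset.Iic k, ⟪gramSchmidtNormed 𝕜 f n, f k⟫_𝕜 • gramSchmidtNormed 𝕜 f n =
      f k := by
  refine sum_inner_gramSchmidtNormed_smul_of_mem_span f ?_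
  rw [Finset.coe_Iic, span_gramSchmidtNormed, span_gramSchmidt_Iic]
  exact Submodule.subset_span ⟨k, Set.mem_Iic.2 le_rfl, rfl⟩

variable (𝕜) in
noncomputable def gramSchmidtCoords (f : ι → E) (k : ι) : ℓ²(ι, 𝕜) :=
  ⟨fun n => ⟪gramSchmidtNormed 𝕜 f n, f k⟫_𝕜, by
    refine Memℓp.of_exponent_ge (memℓp_zero ((Set.finite_Iic k).subset fun n hn => ?_)) zero_le
    by_contra hnk
    exact hn (inner_gramSchmidtNormed_eq_zero_of_lt f (not_le.mp hnk))⟩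

theorem gramSchmidtCoords_apply (f : ι → E) (k n : ι) :
    gramSchmidtCoords 𝕜 f k n = ⟪gramSchmidtNormed 𝕜 f n, f k⟫_𝕜 := rfl

theorem inner_gramSchmidtCoords (f : ι → E) (k l : ι) :
    ⟪gramSchmidtCoords 𝕜 f k, gramSchmidtCoords 𝕜 f l⟫_𝕜 = ⟪f k, f l⟫_𝕜 := by
  set e := gramSchmidtNormed 𝕜 f
  calc ⟪gramSchmidtCoords 𝕜 f k, gramSchmidtCoords 𝕜 f l⟫_𝕜
      = ∑ n ∈ Finset.Iic l, ⟪e n, f l⟫_𝕜 * ⟪f k, e n⟫_𝕜 := by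
        rw [lp.inner_eq_tsum, tsum_eq_sum fun n hn => ?_]
        · refine Finset.sum_congr rfl fun n _ => ?_
          rw [gramSchmidtCoords_apply, gramSchmidtCoords_apply, RCLike.inner_apply,
            inner_conj_symm]
        · rw [gramSchmidtCoords_apply f l,
            inner_gramSchmidtNormed_eq_zero_of_lt f (not_le.mp (Finset.mem_Iic.not.mp hn)),
            inner_zero_right]
    _ = ⟪f k, ∑ n ∈ Finset.Iic l, ⟪e n, f l⟫_𝕜 • e n⟫_𝕜 := by
        simp only [inner_sum, inner_smul_right]
    _ = ⟪f k, f l⟫_𝕜 := by rw [sum_inner_gramSchmidtNormed_smul]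

end InnerProductSpace

theorem Matrix.posSemidef_iff_exists_eq_gram_lp {𝕜 ι : Type*} [RCLike 𝕜]
    [LinearOrder ι] [LocallyFiniteOrderBot ι] [WellFoundedLT ι] {M : Matrix ι ι 𝕜} :
    M.PosSemidef ↔ ∃ v : ι → ℓ²(ι, 𝕜), M = gram 𝕜 v := by
  refine ⟨fun hM => ?_, fun ⟨v, hv⟩ => hv ▸ posSemidef_gram' v⟩
  obtain ⟨H, _, _, f, rfl⟩ := hM.exists_eq_gram
  exact ⟨InnerProductSpace.gramSchmidtCoords 𝕜 f, Matrix.ext fun k l =>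
    (InnerProductSpace.inner_gramSchmidtCoords f k l).symm⟩

/-- **Gram factorization of phase matrices.**  A matrix `c : ℕ × ℕ → ℂ` is a phase
matrix if and only if there is a family `(v_k)` of unit vectors of `ℓ²(ℕ,ℂ)` such
that `c_{k,l} = ⟨v_k, v_l⟩` for all `k, l` (inner product conjugate-linear in the
first argument). -/
theorem phase_matrix_iff_gram
    (c : ℕ → ℕ → ℂ) :
    IsPhaseMatrix c ↔
      ∃ v : ℕ → lp (fun _ : ℕ => ℂ) 2, (∀ k, ‖v k‖ = 1) ∧
        ∀ k l : ℕ, c k l = (inner ℂ (v k) (v l) : ℂ) := by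
  have hpsd : IsPhaseMatrix c ↔ (Matrix.of c).PosSemidef ∧ ∀ n, c n n = 1 :=
    and_congr_left' Matrix.posSemidef_iff_complex.symm
  rw [hpsd, Matrix.posSemidef_iff_exists_eq_gram_lp]
  constructor
  · rintro ⟨⟨v, hv⟩, hdiag⟩
    have hc k l : c k l = ⟪v k, v l⟫_ℂ := congrFun₂ hv k l
    exact ⟨v, fun k => inner_self_eq_one_iff.mp (hc k k ▸ hdiag k), hc⟩
  · rintro ⟨v, hnorm, hc⟩
    exact ⟨⟨v, Matrix.ext hc⟩, fun k => (hc k k).trans (inner_self_eq_one_iff.mpr (hnorm k))⟩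
end

section
/- Let c : ℕ × ℕ → ℂ be a phase matrix, let a : ℕ → ℂ be finitely supported with ∑_n |a_n|² = 1, and let X ⊆ [0,2π) be a Borel set whose Lebesgue measure is strictly less than 2π. Then (2π)^{-1} ∫_X ∑_{n,m} c_{n,m} e^{i(n−m)θ} conj(a_n) a_m dθ < 1. -/
open MeasureTheory Real Set
open scoped ComplexConjugate ComplexOrder

/-!
Writing `ψ_θ = ∑ₙ e^{-inθ} aₙ |n⟩`, the phase density at `θ` is the quadratic form
`⟨ψ_θ, C ψ_θ⟩` of the positive semidefinite matrix `c`, hence a nonnegative trigonometric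
polynomial; by Fourier orthogonality and the unit diagonal its integral over a period is
`2π ∑ₙ |aₙ|² = 2π`. The complement of `X` in `[0, 2π)` has positive measure, and a nonnegative
real-analytic function that is not identically zero vanishes only on a null set (its zeros are
isolated), so its integral over that complement is positive.
-/

theorem Differentiable.analyticOnNhd_comp_ofReal {E : Type*} [NormedAddCommGroup E]
    [NormedSpace ℂ E] [CompleteSpace E] {F : ℂ → E} (hF : Differentiable ℂ F) :
    AnalyticOnNhd ℝ (fun x : ℝ => F x) univ := fun x _ =>
  (hF.analyticAt (x : ℂ)).restrictScalars.comp (Complex.ofRealCLM.analyticAt x)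

theorem AnalyticOnNhd.ae_ne_zero {E : Type*} [NormedAddCommGroup E] [NormedSpace ℝ E]
    {μ : Measure ℝ} [NullSingletonClass μ] {f : ℝ → E} (hf : AnalyticOnNhd ℝ f univ)
    (hf₀ : ∃ x, f x ≠ 0) :
    ∀ᵐ x ∂μ, f x ≠ 0 := by
  obtain ⟨x, hx⟩ := hf₀
  have hcod := (hf.eqOn_zero_or_eventually_ne_zero_of_preconnected
    isPreconnected_univ).resolve_left fun h => hx (h (mem_univ x))
  have h := ae_restrict_le_codiscreteWithin (μ := μ) MeasurableSet.univ hcod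
  rwa [Measure.restrict_univ] at h

theorem AnalyticOnNhd.setIntegral_lt_of_measure_lt {μ : Measure ℝ} [NullSingletonClass μ]
    {g : ℝ → ℝ} (hg : AnalyticOnNhd ℝ g univ) (hg_nonneg : 0 ≤ g) (hg₀ : ∃ x, g x ≠ 0) {s t : Set ℝ}
    (hst : t ⊆ s) (ht : MeasurableSet t) (hμ : μ t < μ s) (hgs : IntegrableOn g s μ) :
    ∫ x in t, g x ∂μ < ∫ x in s, g x ∂μ := by
  rw [← sub_pos, ← setIntegral_sdiff ht hgs hst,
    setIntegral_pos_iff_support_of_nonneg_ae (.of_forall hg_nonneg) (hgs.mono_set sdiff_subset),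
    inter_comm, measure_inter_conull (by
      rw [Function.compl_support]
      simpa [ae_iff] using hg.ae_ne_zero (μ := μ) hg₀)]
  exact (tsub_pos_of_lt hμ).trans_le le_measure_sdiff

section PhaseDensity

variable (c : ℕ → ℕ → ℂ) (a : ℕ →₀ ℂ)

noncomputable def phaseShift (θ : ℝ) : ℕ →₀ ℂ :=
  Finsupp.onFinset a.support (fun n => Complex.exp (-(Complex.I * n * θ)) * a n)
    fun _ h => Finsupp.mem_support_iff.2 (right_ne_zero_of_mul h)

theorem quadraticForm_phaseShift (θ : ℝ) :
    ((phaseShift a θ).sum fun n bn => (phaseShift a θ).sum fun m bm => conj bn * c n m * bm) =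
      phaseDensity c a θ := by
  rw [phaseShift, Finsupp.onFinset_sum _ fun n => by simp]
  refine Finset.sum_congr rfl fun n _ => ?_
  rw [Finsupp.onFinset_sum _ fun m => by simp]
  refine Finset.sum_congr rfl fun m _ => ?_
  dsimp only
  have hconj : conj (Complex.exp (-(Complex.I * n * θ))) = Complex.exp (Complex.I * n * θ) := by
    rw [← Complex.exp_conj]
    simp [Complex.conj_ofReal]
  rw [map_mul, hconj, show Complex.I * ((n : ℂ) - m) * θ = Complex.I * n * θ + -(Complex.I * m * θ)
    by ring, Complex.exp_add]
  ring

theorem phaseDensity_nonneg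
    (hc : ∀ b : ℕ →₀ ℂ, 0 ≤ b.sum fun n bn => b.sum fun m bm => conj bn * c n m * bm) (θ : ℝ) :
    0 ≤ phaseDensity c a θ :=
  quadraticForm_phaseShift c a θ ▸ hc _

theorem analyticOnNhd_phaseDensity : AnalyticOnNhd ℝ (phaseDensity c a) univ :=
  Differentiable.analyticOnNhd_comp_ofReal (F := fun z => a.sum fun n an => a.sum fun m am =>
    c n m * Complex.exp (Complex.I * ((n : ℂ) - (m : ℂ)) * z) * conj an * am)
    (by unfold Finsupp.sum; fun_prop)

theorem intervalIntegral_cexp_I_mul_sub (n m : ℕ) :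
    ∫ x in (0 : ℝ)..2 * π, Complex.exp (Complex.I * ((n : ℂ) - m) * x) =
      if n = m then ((2 * π : ℝ) : ℂ) else 0 := by
  split_ifs with h
  · simp [h]
  · rw [integral_exp_mul_complex
      (mul_ne_zero Complex.I_ne_zero (sub_ne_zero.2 (by exact_mod_cast h)))]
    have h2πi : Complex.I * ((n : ℂ) - m) * ((2 * π : ℝ) : ℂ) =
        (((n : ℤ) - m : ℤ) : ℂ) * (2 * π * Complex.I) := by
      push_cast
      ring
    rw [h2πi, Complex.exp_int_mul_two_pi_mul_I]
    simp

theorem intervalIntegral_phaseDensity :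
    ∫ θ in (0 : ℝ)..2 * π, phaseDensity c a θ =
      ((2 * π : ℝ) : ℂ) * a.sum fun n an => c n n * conj an * an := by
  simp only [phaseDensity, Finsupp.sum, Finset.mul_sum]
  rw [intervalIntegral.integral_finsetSum fun n _ =>
    Continuous.intervalIntegrable (by fun_prop) _ _]
  refine Finset.sum_congr rfl fun n hn => ?_
  rw [intervalIntegral.integral_finsetSum fun m _ =>
    Continuous.intervalIntegrable (by fun_prop) _ _]
  simp only [intervalIntegral.integral_mul_const, intervalIntegral.integral_const_mul,
    intervalIntegral_cexp_I_mul_sub]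
  simp [hn]
  ring

end PhaseDensity

/-- **Nonlocalizability (Theorem 1) for states with finitely many excited number
states.**  Let `c` be a phase matrix, `a : ℕ → ℂ` finitely supported with
`∑_n |a_n|² = 1`, and `X ⊆ [0,2π)` a Borel set of Lebesgue measure strictly less
than `2π`.  Then `(2π)⁻¹ ∫_X ∑_{n,m} c_{n,m} e^{i(n-m)θ} conj(a_n) a_m dθ < 1`. -/
theorem phase_nonlocalizable_finite_state
    (c : ℕ → ℕ → ℂ) (hc : IsPhaseMatrix c)
    (a : ℕ →₀ ℂ) (ha : (a.sum fun _ x => ‖x‖ ^ 2) = 1)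
    (X : Set ℝ) (hXm : MeasurableSet X) (hXsub : X ⊆ Ico 0 (2 * π))
    (hXlt : volume X < ENNReal.ofReal (2 * π)) :
    ((1 / (2 * π) : ℝ) : ℂ) * ∫ θ in X, phaseDensity c a θ < 1 := by
  set g : ℝ → ℝ := fun θ => (phaseDensity c a θ).re
  have hfg : phaseDensity c a = fun θ => (g θ : ℂ) :=
    funext fun θ => Complex.eq_re_of_ofReal_le (phaseDensity_nonneg c a hc.1 θ)
  have hg_analytic : AnalyticOnNhd ℝ g univ := fun θ hθ =>
    (Complex.reCLM.analyticAt _).comp (analyticOnNhd_phaseDensity c a θ hθ)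
  have hg_int : IntegrableOn g (Ico 0 (2 * π)) :=
    (hg_analytic.continuousOn.mono (subset_univ _)).integrableOn_Icc.mono_set
      Ico_subset_Icc_self
  have htotal : ∫ θ in Ico 0 (2 * π), g θ = 2 * π := by
    have h := intervalIntegral_phaseDensity c a
    simp only [hfg, hc.2, one_mul, Complex.conj_mul'] at h
    rw [intervalIntegral.integral_of_le two_pi_pos.le, integral_complex_ofReal,
      ← integral_Ico_eq_integral_Ioc] at h
    rw [Finsupp.sum] at ha
    simp only [Finsupp.sum, ← Complex.ofReal_pow, ← Complex.ofReal_sum, ha, Complex.ofReal_one,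
      mul_one] at h
    exact_mod_cast h
  have hg_ne : ∃ θ, g θ ≠ 0 := by
    by_contra! h
    simp [h, two_pi_pos.ne] at htotal
  have hlt : ∫ θ in X, g θ < 2 * π := htotal ▸ hg_analytic.setIntegral_lt_of_measure_lt
    (fun θ => (Complex.le_def.1 (phaseDensity_nonneg c a hc.1 θ)).1) hg_ne hXsub hXm
    (by rwa [Real.volume_Ico, sub_zero]) hg_int
  simp only [hfg, integral_complex_ofReal]
  rw [← Complex.ofReal_mul, ← Complex.ofReal_one, Complex.real_lt_real]
  rwa [one_div, inv_mul_lt_iff₀ two_pi_pos, mul_one]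
end
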